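/- arXiv:2206.13253 — 8 statements merged into one kernel-verified Lean document; each statement's English description precedes it below -/
import Mathlib

section
/- Let n, m ≥ 2 be integers, let O ∈ ℂ and r > 0, and let P and Q be the vertex sets of a regular n-gon and of a regular m-gon, respectively, both inscribed in the circle with center O and radius r. Then there exists a nontrivial rotation about O mapping the set P ∪ Q onto itself if and only if gcd(n, m) > 1. (Equivalently: P ∪ Q is not rotationally symmetric if and only if n and m are coprime.) -/
/-! Writing each vertex as `O + c * ζ` with `c ≠ 0` and `ζ` a root of unity identifies `P ∪ Q`
with a union of cosets `c • μₙ ∪ d • μₘ` in `ℂˣ`, and a rotation about `O` with multiplication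
by a unit `u`. Every `u ∈ μₙ ⊓ μₘ = μ_gcd(n, m)` preserves both cosets. Conversely, if `μₙ` and
`μₘ` meet trivially, an invariant `u` must lie in `μₙ`, likewise in `μₘ`, so `u = 1`. -/

noncomputable section

/-- The vertex set of a regular `n`-gon inscribed in the circle of center `O`
and radius `r`, with phase `θ`. -/
def regularVerts (n : ℕ) (O : ℂ) (r θ : ℝ) : Set ℂ :=
  {z | ∃ k : ℕ, k < n ∧
    z = O + (r : ℂ) * Complex.exp (((θ + 2 * Real.pi * k / n : ℝ) : ℂ) * Complex.I)}

/-- `P` is the vertex set of some regular `n`-gon inscribed in the circle of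
center `O` and radius `r`. -/
def IsRegularNGon (n : ℕ) (O : ℂ) (r : ℝ) (P : Set ℂ) : Prop :=
  ∃ θ : ℝ, P = regularVerts n O r θ

open Pointwise

section CosetUnion

variable {G : Type*} [CommGroup G] {H K : Subgroup G} {a b u : G}

theorem smul_union_smul_subgroup_eq (hu : u ∈ H ⊓ K) :
    u • (a • (H : Set G) ∪ b • (K : Set G)) = a • (H : Set G) ∪ b • (K : Set G) := by
  rw [Set.smul_set_union, smul_comm u a, smul_comm u b,
    smul_coe_set (Subgroup.mem_inf.1 hu).1, smul_coe_set (Subgroup.mem_inf.1 hu).2]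

/-- Of two points `a, a * μ` of `a • H` with `μ ≠ 1`, one is moved by `u` back into `a • H`:
otherwise both land in `b • K`, and their ratio `μ` lies in `H ⊓ K`. -/
theorem mem_of_smul_union_smul_subgroup_subset (hHK : Disjoint H K) (hH : H ≠ ⊥)
    (hu : u • (a • (H : Set G) ∪ b • (K : Set G)) ⊆ a • (H : Set G) ∪ b • (K : Set G)) :
    u ∈ H := by
  obtain ⟨⟨μ, hμH⟩, hμ1⟩ := Subgroup.ne_bot_iff_exists_ne_one.1 hH
  have image_mem (h : G) (hh : h ∈ H) : u * (a * h) ∈ a • (H : Set G) ∪ b • (K : Set G) :=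
    hu (Set.smul_mem_smul_set (Or.inl (Set.smul_mem_smul_set hh)))
  simp only [Set.mem_union, mem_leftCoset_iff, SetLike.mem_coe] at image_mem
  rcases image_mem 1 H.one_mem with h₁ | h₁
  · simpa [mul_comm a⁻¹, mul_assoc] using h₁
  rcases image_mem μ hμH with hμ | hμ
  · simpa [mul_comm a⁻¹, mul_assoc, hμH] using H.mul_mem hμ (H.inv_mem hμH)
  · have hμK : μ ∈ K := by simpa [mul_assoc] using K.mul_mem (K.inv_mem h₁) hμ
    exact absurd (Subgroup.disjoint_def.1 hHK hμH hμK) (by simpa using hμ1)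

theorem eq_one_of_smul_union_smul_subgroup_eq (hHK : Disjoint H K) (hH : H ≠ ⊥) (hK : K ≠ ⊥)
    (hu : u • (a • (H : Set G) ∪ b • (K : Set G)) = a • (H : Set G) ∪ b • (K : Set G)) :
    u = 1 := by
  have huH := mem_of_smul_union_smul_subgroup_subset hHK hH hu.subset
  rw [Set.union_comm] at hu
  have huK := mem_of_smul_union_smul_subgroup_subset hHK.symm hK hu.subset
  exact Subgroup.disjoint_def.1 hHK huH huK

end CosetUnion

theorem Complex.rootsOfUnity_ne_bot {k : ℕ} (hk : 1 < k) : rootsOfUnity k ℂ ≠ ⊥ := by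
  have : NeZero k := ⟨by omega⟩
  rw [← Subgroup.one_lt_card_iff_ne_bot, Complex.card_rootsOfUnity]
  exact hk

theorem Complex.image_rotation_image_add_units_eq_iff (O : ℂ) (u : ℂˣ) (S : Set ℂˣ) :
    (fun z => O + u * (z - O)) '' ((fun x : ℂˣ => O + x) '' S) =
      (fun x : ℂˣ => O + x) '' S ↔ u • S = S := by
  have add_units_injective : Function.Injective (fun x : ℂˣ => O + x) :=
    (add_right_injective O).comp Units.val_injective
  rw [← add_units_injective.image_injective.eq_iff, ← Set.image_smul, Set.image_image,
    Set.image_image]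
  simp

theorem IsRegularNGon.exists_eq_image_smul_rootsOfUnity {n : ℕ} [NeZero n] {O : ℂ} {r : ℝ}
    {P : Set ℂ} (hP : IsRegularNGon n O r P) (hr : r ≠ 0) :
    ∃ c : ℂˣ, P = (fun x : ℂˣ => O + x) '' (c • (rootsOfUnity n ℂ : Set ℂˣ)) := by
  obtain ⟨θ, rfl⟩ := hP
  refine ⟨Units.mk0 (r * Complex.exp (θ * Complex.I)) (by simp [hr, Complex.exp_ne_zero]), ?_⟩
  ext z
  simp only [regularVerts, ← Set.image_smul, Set.image_image, Set.mem_image, SetLike.mem_coe,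
    Complex.mem_rootsOfUnity]
  have exp_vertex (k : ℕ) : Complex.exp (((θ + 2 * Real.pi * k / n : ℝ) : ℂ) * Complex.I) =
      Complex.exp (θ * Complex.I) * Complex.exp (2 * Real.pi * Complex.I * (k / n)) := by
    rw [← Complex.exp_add]
    push_cast
    ring_nf
  constructor
  · rintro ⟨k, hk, rfl⟩
    refine ⟨Units.mk0 _ (Complex.exp_ne_zero _), ⟨k, hk, rfl⟩, ?_⟩
    rw [smul_eq_mul, Units.val_mul, Units.val_mk0, Units.val_mk0, exp_vertex, mul_assoc]
  · rintro ⟨x, ⟨k, hk, hx⟩, rfl⟩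
    refine ⟨k, hk, ?_⟩
    rw [smul_eq_mul, Units.val_mul, Units.val_mk0, exp_vertex, hx, mul_assoc]

/-- There exists a nontrivial rotation about `O` mapping `P ∪ Q` onto itself
iff `gcd n m > 1`. -/
theorem stmt0 (n m : ℕ) (hn : 2 ≤ n) (hm : 2 ≤ m) (O : ℂ) (r : ℝ) (hr : 0 < r)
    (P Q : Set ℂ) (hP : IsRegularNGon n O r P) (hQ : IsRegularNGon m O r Q) :
    (∃ u : ℂ, ‖u‖ = 1 ∧ u ≠ 1 ∧
      (fun z => O + u * (z - O)) '' (P ∪ Q) = P ∪ Q) ↔ 1 < Nat.gcd n m := by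
  have : NeZero n := ⟨by omega⟩
  have : NeZero m := ⟨by omega⟩
  obtain ⟨c, rfl⟩ := hP.exists_eq_image_smul_rootsOfUnity hr.ne'
  obtain ⟨d, rfl⟩ := hQ.exists_eq_image_smul_rootsOfUnity hr.ne'
  rw [← Set.image_union]
  constructor
  · rintro ⟨u, hu_norm, hu_ne, hu⟩
    have hu0 : u ≠ 0 := norm_ne_zero_iff.1 (by rw [hu_norm]; exact one_ne_zero)
    by_contra hg
    have hcop : n.Coprime m := by
      have := Nat.gcd_pos_of_pos_left m (NeZero.pos n)
      rw [Nat.coprime_iff_gcd_eq_one]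
      omega
    exact hu_ne (Units.ext_iff.1 (eq_one_of_smul_union_smul_subgroup_eq
      (disjoint_rootsOfUnity_of_coprime hcop) (Complex.rootsOfUnity_ne_bot hn)
      (Complex.rootsOfUnity_ne_bot hm)
      ((Complex.image_rotation_image_add_units_eq_iff O (Units.mk0 u hu0) _).1 hu)))
  · intro hg
    obtain ⟨⟨ζ, hζ⟩, hζ1⟩ := Subgroup.ne_bot_iff_exists_ne_one.1 (Complex.rootsOfUnity_ne_bot hg)
    rw [← rootsOfUnity_inf_rootsOfUnity] at hζ
    refine ⟨ζ, Complex.norm_eq_one_of_mem_rootsOfUnity (Subgroup.mem_inf.1 hζ).1,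
      fun h => hζ1 (Subtype.ext (Units.ext h)),
      (Complex.image_rotation_image_add_units_eq_iff O ζ _).2 (smul_union_smul_subgroup_eq hζ)⟩
end
end

section
/- Let n, m ≥ 2 be integers with gcd(n, m) = 1, let O ∈ ℂ and r > 0, and let P and Q be the vertex sets of a regular n-gon and of a regular m-gon, respectively, both inscribed in the circle with center O and radius r. Then P and Q intersect in at most one point, i.e. the set P ∩ Q has at most one element. -/
noncomputable section

/-!
Seen from the centre `O`, the vertices of a regular `n`-gon with phase `θ` are `n`-th roots of the
single nonzero number `(r * exp (θ i)) ^ n`. So for two common vertices `z₁, z₂` of the two polygons,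
`(z₁ - O) / (z₂ - O)` is both an `n`-th and an `m`-th root of unity, hence `1` as `gcd n m = 1`.
-/

open Complex

theorem eq_of_pow_eq_of_pow_eq_of_coprime {K : Type*} [CommGroupWithZero K] {a b : K} {n m : ℕ}
    (hnm : n.Coprime m) (hn : a ^ n = b ^ n) (hm : a ^ m = b ^ m) (hb : b ≠ 0) : a = b := by
  have root_of_unity {k : ℕ} (hk : a ^ k = b ^ k) : (a / b) ^ k = 1 := by
    rw [div_pow, hk, div_self (pow_ne_zero k hb)]
  exact div_eq_one_iff_eq hb |>.mp <|
    (pow_eq_one_iff_of_coprime hnm).mp ⟨root_of_unity hn, root_of_unity hm⟩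

section regularVerts

variable {n : ℕ} {O z : ℂ} {r θ : ℝ}

theorem sub_pow_eq_of_mem_regularVerts (hz : z ∈ regularVerts n O r θ) :
    (z - O) ^ n = (r * exp (θ * I)) ^ n := by
  obtain ⟨k, hk, rfl⟩ := hz
  have hn : (n : ℂ) ≠ 0 := Nat.cast_ne_zero.mpr (by omega)
  have hphase : (n : ℂ) * (((θ + 2 * Real.pi * k / n : ℝ) : ℂ) * I) =
      n * (θ * I) + k * (2 * Real.pi * I) := by
    push_cast
    field_simp
  rw [add_sub_cancel_left, mul_pow, mul_pow, ← exp_nat_mul, ← exp_nat_mul, hphase, exp_add,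
    exp_nat_mul_two_pi_mul_I, mul_one]

theorem sub_ne_zero_of_mem_regularVerts (hr : r ≠ 0) (hz : z ∈ regularVerts n O r θ) :
    z - O ≠ 0 := by
  obtain ⟨k, -, rfl⟩ := hz
  rw [add_sub_cancel_left]
  exact mul_ne_zero (ofReal_ne_zero.mpr hr) (exp_ne_zero _)

end regularVerts

theorem stmt1_general (n m : ℕ) (hgcd : Nat.gcd n m = 1)
    (O : ℂ) (r : ℝ) (hr : 0 < r)
    (P Q : Set ℂ) (hP : IsRegularNGon n O r P) (hQ : IsRegularNGon m O r Q) :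
    (P ∩ Q).Subsingleton := by
  obtain ⟨θ, rfl⟩ := hP
  obtain ⟨φ, rfl⟩ := hQ
  rintro z₁ ⟨h₁P, h₁Q⟩ z₂ ⟨h₂P, h₂Q⟩
  have hsub : z₁ - O = z₂ - O :=
    eq_of_pow_eq_of_pow_eq_of_coprime hgcd
      ((sub_pow_eq_of_mem_regularVerts h₁P).trans (sub_pow_eq_of_mem_regularVerts h₂P).symm)
      ((sub_pow_eq_of_mem_regularVerts h₁Q).trans (sub_pow_eq_of_mem_regularVerts h₂Q).symm)
      (sub_ne_zero_of_mem_regularVerts hr.ne' h₂P)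
  exact sub_left_injective hsub

/-- If `gcd n m = 1`, the vertex sets of a regular `n`-gon and a regular `m`-gon
inscribed in the same circle intersect in at most one point. -/
theorem stmt1 (n m : ℕ) (hn : 2 ≤ n) (hm : 2 ≤ m) (hgcd : Nat.gcd n m = 1)
    (O : ℂ) (r : ℝ) (hr : 0 < r)
    (P Q : Set ℂ) (hP : IsRegularNGon n O r P) (hQ : IsRegularNGon m O r Q) :
    (P ∩ Q).Subsingleton :=
  stmt1_general n m hgcd O r hr P Q hP hQ
end
end

section
/- Let n, m ≥ 2 be integers with gcd(n, m) = 1, let O ∈ ℂ and r > 0, and let P and Q be the vertex sets of a regular n-gon and of a regular m-gon, respectively, both inscribed in the circle c with center O and radius r. Suppose (V1, W1) and (V2, W2) are two distinct pairs in P × Q such that V1 ≠ V2, W1 ≠ W2, each pair (Vi, Wi) is adjacent in P ∪ Q, and the two gap angles are equal to a common value α with 0 < α < π. Then the reflection of the plane across the perpendicular bisector of the segment V1V2 maps P ∪ Q onto itself; moreover, if M1 and M2 denote the midpoints of the empty open arcs realizing the gap angles of (V1, W1) and (V2, W2) respectively, then M1 and M2 are not antipodal on c, i.e. M1 + M2 ≠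 2·O. -/
noncomputable section

/-- Rotation about `O` by angle `t` (counterclockwise). -/
def rotAbout (O : ℂ) (t : ℝ) (z : ℂ) : ℂ :=
  O + (z - O) * Complex.exp ((t : ℂ) * Complex.I)

/-- `(V, W)` is an adjacent pair of the set `S` (contained in a circle centered
at `O`) whose gap angle is `α` and whose empty open arc has midpoint `M`:
either the open arc of angular measure `α` going counterclockwise from `V` ends
at `W` and contains no point of `S`, or symmetrically with `V` and `W`
interchanged; `M` is the midpoint of that empty arc. -/
def IsGapWithMid (S : Set ℂ) (O V W : ℂ) (α : ℝ) (M : ℂ) : Prop :=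
  V ∈ S ∧ W ∈ S ∧ V ≠ W ∧ 0 < α ∧ α < 2 * Real.pi ∧
    ((W = rotAbout O α V ∧ (∀ t : ℝ, 0 < t → t < α → rotAbout O t V ∉ S) ∧
        M = rotAbout O (α / 2) V) ∨
      (V = rotAbout O α W ∧ (∀ t : ℝ, 0 < t → t < α → rotAbout O t W ∉ S) ∧
        M = rotAbout O (α / 2) W))

/-- Reflection of the plane across the perpendicular bisector of the segment
`V1 V2` (for `V1 ≠ V2`): the unique reflection interchanging `V1` and `V2`. -/
def perpBisectorReflection (V1 V2 : ℂ) : ℂ → ℂ := fun z =>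
  (V1 + V2) / 2 - (V2 - V1) / (starRingEnd ℂ) (V2 - V1) * (starRingEnd ℂ) (z - (V1 + V2) / 2)

/-!
Put the center at the origin. The vertices of a regular `n`-gon are then the roots of
`z ^ n = c ^ n`, and a gap of angle `α` is multiplication by `e = exp (α i)`. If both gaps
had the same orientation, `(V₁ - O) / (V₂ - O)` would be both an `n`-th and an `m`-th root of
unity, hence `1`. With opposite orientations, `(V₁ - O) (V₂ - O) = (W₁ - O) (W₂ - O)`; on the
circle the reflection is `z ↦ O + (V₁ - O) (V₂ - O) / (z - O)`, which preserves both root sets.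
Antipodal midpoints would make `-e` a common root of unity, i.e. `α ≡ π`.
-/

open Complex Real ComplexConjugate

theorem ne_zero_of_pow_eq_pow {M₀ : Type*} [MonoidWithZero M₀] [NoZeroDivisors M₀] {a c : M₀}
    {n : ℕ} (hn : n ≠ 0) (hc : c ≠ 0) (h : a ^ n = c ^ n) : a ≠ 0 :=
  (pow_ne_zero_iff hn).1 (h ▸ pow_ne_zero n hc)

theorem norm_eq_of_pow_eq {𝕜 : Type*} [NormedDivisionRing 𝕜] {a c : 𝕜} {n : ℕ} (hn : n ≠ 0)
    (h : a ^ n = c ^ n) : ‖a‖ = ‖c‖ :=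
  (pow_left_inj₀ (norm_nonneg a) (norm_nonneg c) hn).1 (by rw [← norm_pow, h, norm_pow])

section RootsOfPowers

variable {K : Type*} [Field K] {n m : ℕ} {a b c d w v₁ v₂ w₁ w₂ e : K}

theorem div_pow_eq_one_of_pow_eq (hc : c ≠ 0) (ha : a ^ n = c ^ n) (hb : b ^ n = c ^ n) :
    (a / b) ^ n = 1 := by
  rw [div_pow, ha, hb, div_self (pow_ne_zero n hc)]

theorem mul_div_pow_eq_of_pow_eq (hc : c ≠ 0) (ha : a ^ n = c ^ n) (hb : b ^ n = c ^ n)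
    (hw : w ^ n = c ^ n) : (a * b / w) ^ n = c ^ n := by
  rw [div_pow, mul_pow, ha, hb, hw, mul_div_cancel_right₀ _ (pow_ne_zero n hc)]

/-- The common ratio `v₁ / v₂ = w₁ / w₂` is both an `n`-th and an `m`-th root of unity. -/
theorem eq_of_mul_eq_mul_of_coprime (hnm : n.Coprime m) (hn : n ≠ 0) (hm : m ≠ 0)
    (hc : c ≠ 0) (hd : d ≠ 0) (hv₁ : v₁ ^ n = c ^ n) (hv₂ : v₂ ^ n = c ^ n)
    (hw₁ : w₁ ^ m = d ^ m) (hw₂ : w₂ ^ m = d ^ m) (h : v₁ * w₂ = v₂ * w₁) : v₁ = v₂ := by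
  have hv₂0 : v₂ ≠ 0 := ne_zero_of_pow_eq_pow hn hc hv₂
  have hw₂0 : w₂ ≠ 0 := ne_zero_of_pow_eq_pow hm hd hw₂
  have hratio : v₁ / v₂ = w₁ / w₂ := by
    rw [div_eq_div_iff hv₂0 hw₂0, h, mul_comm]
  have hone : v₁ / v₂ = 1 := (pow_eq_one_iff_of_coprime hnm).1
    ⟨div_pow_eq_one_of_pow_eq hc hv₁ hv₂, hratio ▸ div_pow_eq_one_of_pow_eq hd hw₁ hw₂⟩
  exact (div_eq_one_iff_eq hv₂0).1 hone

theorem add_ne_zero_of_opposite_rotations (hnm : n.Coprime m) (hn : n ≠ 0) (hm : m ≠ 0)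
    (hc : c ≠ 0) (hd : d ≠ 0) (hv₁ : v₁ ^ n = c ^ n) (hv₂ : v₂ ^ n = c ^ n)
    (hw₁ : w₁ ^ m = d ^ m) (hw₂ : w₂ ^ m = d ^ m) (he : e ≠ -1)
    (h₁ : w₁ = v₁ * e) (h₂ : v₂ = w₂ * e) : v₁ + w₂ ≠ 0 := by
  intro hsum
  have hv₁' : v₁ = -w₂ := eq_neg_of_add_eq_zero_left hsum
  have hv : v₂ = v₁ := eq_of_mul_eq_mul_of_coprime hnm hn hm hc hd hv₂ hv₁ hw₁ hw₂
    (by rw [h₁, h₂, hv₁']; ring)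
  have hw₂0 : w₂ ≠ 0 := ne_zero_of_pow_eq_pow hm hd hw₂
  exact he (mul_left_cancel₀ hw₂0 (by linear_combination hv - h₂ + hv₁'))

end RootsOfPowers

theorem regularVerts_eq_setOf_pow_eq {n : ℕ} (hn : n ≠ 0) (O : ℂ) {r : ℝ} (hr : r ≠ 0)
    (θ : ℝ) : regularVerts n O r θ = {z | (z - O) ^ n = (r * exp (θ * I)) ^ n} := by
  have : NeZero n := ⟨hn⟩
  have hζ := isPrimitiveRoot_exp n hn
  have hc : (r * exp (θ * I) : ℂ) ≠ 0 := mul_ne_zero (ofReal_ne_zero.2 hr) (exp_ne_zero _)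
  have hvert (k : ℕ) : (r : ℂ) * exp (↑(θ + 2 * π * k / n) * I)
      = r * exp (θ * I) * exp (2 * π * I / n) ^ k := by
    rw [← Complex.exp_nat_mul, mul_assoc (r : ℂ), ← Complex.exp_add]
    congr 2
    push_cast
    ring
  ext z
  simp only [regularVerts, Set.mem_ofPred_eq]
  constructor
  · rintro ⟨k, -, rfl⟩
    rw [add_sub_cancel_left, hvert, mul_pow, ← pow_mul, mul_comm k, pow_mul, hζ.pow_eq_one,
      one_pow, mul_one]
  · intro hz
    obtain ⟨k, hk, hζk⟩ := hζ.eq_pow_of_pow_eq_one (div_pow_eq_one_of_pow_eq hc hz rfl)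
    exact ⟨k, hk, by rw [hvert, hζk, mul_div_cancel₀ _ hc, add_sub_cancel]⟩

theorem perpBisectorReflection_eq_of_norm_eq {O V₁ V₂ z : ℂ} (hV : V₁ ≠ V₂)
    (h₁ : ‖V₁ - O‖ = ‖z - O‖) (h₂ : ‖V₂ - O‖ = ‖z - O‖) :
    perpBisectorReflection V₁ V₂ z = O + (V₁ - O) * (V₂ - O) / (z - O) := by
  obtain ⟨a, rfl⟩ : ∃ a, V₁ = O + a := ⟨V₁ - O, by ring⟩
  obtain ⟨b, rfl⟩ : ∃ b, V₂ = O + b := ⟨V₂ - O, by ring⟩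
  obtain ⟨w, rfl⟩ : ∃ w, z = O + w := ⟨z - O, by ring⟩
  simp only [add_sub_cancel_left] at h₁ h₂ ⊢
  have hρ : ‖w‖ ≠ 0 := fun h₀ ↦
    hV (by rw [norm_eq_zero.1 (h₁.trans h₀), norm_eq_zero.1 (h₂.trans h₀)])
  have hconj {x : ℂ} (hx : ‖x‖ = ‖w‖) : conj x = ‖w‖ ^ 2 / x := by
    rw [eq_div_iff (norm_ne_zero_iff.1 (hx ▸ hρ)), mul_comm, mul_conj', hx]
  have ha : a ≠ 0 := norm_ne_zero_iff.1 (h₁ ▸ hρ)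
  have hb : b ≠ 0 := norm_ne_zero_iff.1 (h₂ ▸ hρ)
  have hw : w ≠ 0 := norm_ne_zero_iff.1 hρ
  unfold perpBisectorReflection
  rw [show O + b - (O + a) = b - a by ring,
    show O + w - (O + a + (O + b)) / 2 = w - (a + b) / 2 by ring]
  simp only [map_sub, map_div₀, map_add, hconj h₁, hconj h₂, hconj rfl, map_ofNat]
  have hab : a - b ≠ 0 := sub_ne_zero.2 fun h ↦ hV (by rw [h])
  have hρ' : (‖w‖ : ℂ) ≠ 0 := ofReal_ne_zero.2 hρ
  field_simp
  ring

theorem IsGapWithMid.sub_center {S : Set ℂ} {O V W M : ℂ} {α : ℝ}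
    (h : IsGapWithMid S O V W α M) :
    (W - O = (V - O) * exp (α * I) ∧ M - O = (V - O) * exp (↑(α / 2) * I)) ∨
      (V - O = (W - O) * exp (α * I) ∧ M - O = (W - O) * exp (↑(α / 2) * I)) := by
  obtain ⟨-, -, -, -, -, ⟨rfl, -, rfl⟩ | ⟨rfl, -, rfl⟩⟩ := h
  exacts [Or.inl ⟨add_sub_cancel_left _ _, add_sub_cancel_left _ _⟩,
    Or.inr ⟨add_sub_cancel_left _ _, add_sub_cancel_left _ _⟩]

theorem exp_mul_I_ne_neg_one {α : ℝ} (h₀ : 0 < α) (hπ : α < π) : exp (α * I) ≠ -1 := by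
  intro h
  have := congrArg im h
  rw [exp_ofReal_mul_I_im, neg_im, one_im, neg_zero] at this
  exact (sin_pos_of_pos_of_lt_pi h₀ hπ).ne' this

theorem image_perpBisectorReflection_eq {n m : ℕ} {O c d V₁ V₂ W₁ W₂ : ℂ} (hn : n ≠ 0)
    (hm : m ≠ 0) (hc : c ≠ 0) (hd : d ≠ 0) (hcd : ‖c‖ = ‖d‖)
    (hV₁ : (V₁ - O) ^ n = c ^ n) (hV₂ : (V₂ - O) ^ n = c ^ n)
    (hW₁ : (W₁ - O) ^ m = d ^ m) (hW₂ : (W₂ - O) ^ m = d ^ m) (hV : V₁ ≠ V₂)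
    (hVW : (V₁ - O) * (V₂ - O) = (W₁ - O) * (W₂ - O)) :
    perpBisectorReflection V₁ V₂ '' ({z | (z - O) ^ n = c ^ n} ∪ {z | (z - O) ^ m = d ^ m}) =
      {z | (z - O) ^ n = c ^ n} ∪ {z | (z - O) ^ m = d ^ m} := by
  set S := {z | (z - O) ^ n = c ^ n} ∪ {z | (z - O) ^ m = d ^ m}
  have hnorm : ∀ z ∈ S, ‖z - O‖ = ‖c‖ := by
    rintro z (hz | hz)
    exacts [norm_eq_of_pow_eq hn hz, (norm_eq_of_pow_eq hm hz).trans hcd.symm]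
  have hreflect : ∀ z ∈ S,
      perpBisectorReflection V₁ V₂ z = O + (V₁ - O) * (V₂ - O) / (z - O) := fun z hz ↦
    perpBisectorReflection_eq_of_norm_eq hV
      ((norm_eq_of_pow_eq hn hV₁).trans (hnorm z hz).symm)
      ((norm_eq_of_pow_eq hn hV₂).trans (hnorm z hz).symm)
  have hmaps : ∀ z ∈ S, perpBisectorReflection V₁ V₂ z ∈ S := by
    intro z hz
    rw [hreflect z hz]
    rcases hz with hz | hz
    · left
      rw [Set.mem_ofPred_eq, add_sub_cancel_left]
      exact mul_div_pow_eq_of_pow_eq hc hV₁ hV₂ hz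
    · right
      rw [Set.mem_ofPred_eq, add_sub_cancel_left, hVW]
      exact mul_div_pow_eq_of_pow_eq hd hW₁ hW₂ hz
  have hprod : (V₁ - O) * (V₂ - O) ≠ 0 :=
    mul_ne_zero (ne_zero_of_pow_eq_pow hn hc hV₁) (ne_zero_of_pow_eq_pow hn hc hV₂)
  refine (Set.image_subset_iff.2 hmaps).antisymm fun z hz ↦ ⟨_, hmaps z hz, ?_⟩
  rw [hreflect _ (hmaps z hz), hreflect z hz, add_sub_cancel_left, div_div_cancel₀ hprod,
    add_sub_cancel]

theorem stmt2_general (n m : ℕ) (hn : 2 ≤ n) (hm : 2 ≤ m) (hgcd : Nat.gcd n m = 1)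
    (O : ℂ) (r : ℝ) (hr : 0 < r) (P Q : Set ℂ)
    (hP : IsRegularNGon n O r P) (hQ : IsRegularNGon m O r Q)
    (V1 W1 V2 W2 M1 M2 : ℂ) (α : ℝ)
    (hV1 : V1 ∈ P) (hW1 : W1 ∈ Q) (hV2 : V2 ∈ P) (hW2 : W2 ∈ Q)
    (hVV : V1 ≠ V2)
    (hα0 : 0 < α) (hαπ : α < Real.pi)
    (h1 : IsGapWithMid (P ∪ Q) O V1 W1 α M1)
    (h2 : IsGapWithMid (P ∪ Q) O V2 W2 α M2) :
    perpBisectorReflection V1 V2 '' (P ∪ Q) = P ∪ Q ∧ M1 + M2 ≠ 2 * O := by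
  obtain ⟨θ, rfl⟩ := hP
  obtain ⟨ψ, rfl⟩ := hQ
  have hn₀ : n ≠ 0 := by omega
  have hm₀ : m ≠ 0 := by omega
  have hc : (r * exp (θ * I) : ℂ) ≠ 0 := mul_ne_zero (ofReal_ne_zero.2 hr.ne') (exp_ne_zero _)
  have hd : (r * exp (ψ * I) : ℂ) ≠ 0 := mul_ne_zero (ofReal_ne_zero.2 hr.ne') (exp_ne_zero _)
  have hcd : ‖(r * exp (θ * I) : ℂ)‖ = ‖(r * exp (ψ * I) : ℂ)‖ := by
    simp only [norm_mul, norm_exp_ofReal_mul_I]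
  have he := exp_mul_I_ne_neg_one hα0 hαπ
  rw [regularVerts_eq_setOf_pow_eq hn₀ O hr.ne'] at hV1 hV2 ⊢
  rw [regularVerts_eq_setOf_pow_eq hm₀ O hr.ne'] at hW1 hW2 ⊢
  have hsame := eq_of_mul_eq_mul_of_coprime hgcd hn₀ hm₀ hc hd hV1 hV2 hW1 hW2
  rcases h1.sub_center with ⟨hW1e, hM1⟩ | ⟨hV1e, hM1⟩ <;>
    rcases h2.sub_center with ⟨hW2e, hM2⟩ | ⟨hV2e, hM2⟩
  · exact absurd (sub_left_injective (hsame (by rw [hW1e, hW2e]; ring))) hVV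
  · refine ⟨image_perpBisectorReflection_eq hn₀ hm₀ hc hd hcd hV1 hV2 hW1 hW2 hVV
      (by rw [hW1e, hV2e]; ring), fun hM ↦ ?_⟩
    refine add_ne_zero_of_opposite_rotations hgcd hn₀ hm₀ hc hd hV1 hV2 hW1 hW2 he hW1e hV2e ?_
    exact (mul_eq_zero.1 (by linear_combination hM - hM1 - hM2)).resolve_right (exp_ne_zero _)
  · refine ⟨image_perpBisectorReflection_eq hn₀ hm₀ hc hd hcd hV1 hV2 hW1 hW2 hVV
      (by rw [hV1e, hW2e]; ring), fun hM ↦ ?_⟩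
    refine add_ne_zero_of_opposite_rotations hgcd hn₀ hm₀ hc hd hV2 hV1 hW2 hW1 he hW2e hV1e ?_
    exact (mul_eq_zero.1 (by linear_combination hM - hM1 - hM2)).resolve_right (exp_ne_zero _)
  · exact absurd (sub_left_injective (hsame (by rw [hV1e, hV2e]; ring))) hVV

theorem stmt2 (n m : ℕ) (hn : 2 ≤ n) (hm : 2 ≤ m) (hgcd : Nat.gcd n m = 1)
    (O : ℂ) (r : ℝ) (hr : 0 < r) (P Q : Set ℂ)
    (hP : IsRegularNGon n O r P) (hQ : IsRegularNGon m O r Q)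
    (V1 W1 V2 W2 M1 M2 : ℂ) (α : ℝ)
    (hV1 : V1 ∈ P) (hW1 : W1 ∈ Q) (hV2 : V2 ∈ P) (hW2 : W2 ∈ Q)
    (hVV : V1 ≠ V2) (hWW : W1 ≠ W2)
    (hα0 : 0 < α) (hαπ : α < Real.pi)
    (h1 : IsGapWithMid (P ∪ Q) O V1 W1 α M1)
    (h2 : IsGapWithMid (P ∪ Q) O V2 W2 α M2) :
    perpBisectorReflection V1 V2 '' (P ∪ Q) = P ∪ Q ∧ M1 + M2 ≠ 2 * O :=
  stmt2_general n m hn hm hgcd O r hr P Q hP hQ V1 W1 V2 W2 M1 M2 α hV1 hW1 hV2 hW2 hVV hα0 hαπ h1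
    h2

end
end

section
/- Let n, m ≥ 2 be integers with gcd(n, m) = 1, let O ∈ ℂ and r > 0, and let P and Q be the vertex sets of a regular n-gon and of a regular m-gon, respectively, both inscribed in the circle with center O and radius r. Then there do not exist three pairwise distinct pairs (V1, W1), (V2, W2), (V3, W3) ∈ P × Q such that each pair (Vi, Wi) is adjacent in P ∪ Q and the three gap angles of these pairs are all equal. -/
/-! A rotation by `α` about `O` sends at most one vertex of the `n`-gon to a vertex of the
`m`-gon: if it sends `k ↦ j` and `k' ↦ j'`, comparing phases gives
`(j - j') n ≡ (k - k') m (mod n m)`, and coprimality forces `j = j'`, `k = k'`.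
A gap of angle `α` from a point of `P` to a point of `Q` goes either counterclockwise
(`W = rot_α V`) or clockwise (`V = rot_α W`), so among three such gaps two have the same
orientation and hence coincide. -/

noncomputable section

/-- `(V, W)` is an adjacent pair of the set `S` (contained in a circle centered
at `O`) with gap angle `α`: either the open arc of angular measure `α` going
counterclockwise from `V` ends at `W` and contains no point of `S`, or
symmetrically with `V` and `W` interchanged. -/
def IsGap (S : Set ℂ) (O V W : ℂ) (α : ℝ) : Prop :=
  V ∈ S ∧ W ∈ S ∧ V ≠ W ∧ 0 < α ∧ α < 2 * Real.pi ∧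
    ((W = rotAbout O α V ∧ ∀ t : ℝ, 0 < t → t < α → rotAbout O t V ∉ S) ∨
      (V = rotAbout O α W ∧ ∀ t : ℝ, 0 < t → t < α → rotAbout O t W ∉ S))

lemma eq_of_dvd_sub_mul_of_coprime {m n j j' : ℕ} (hco : m.Coprime n) (hj : j < m)
    (hj' : j' < m) (hdvd : (m : ℤ) ∣ ((j : ℤ) - j') * n) : j = j' := by
  have hm : (m : ℤ) ∣ (j : ℤ) - j' :=
    (Nat.isCoprime_iff_coprime.mpr hco).dvd_of_dvd_mul_right hdvd
  have := Int.eq_zero_of_abs_lt_dvd hm (by rw [abs_lt]; omega)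
  omega

lemma eq_and_eq_of_mul_dvd_of_coprime {n m k k' j j' : ℕ} (hco : n.Coprime m)
    (hk : k < n) (hk' : k' < n) (hj : j < m) (hj' : j' < m)
    (hdvd : ((n * m : ℕ) : ℤ) ∣ ((j : ℤ) - j') * n - ((k : ℤ) - k') * m) :
    k = k' ∧ j = j' := by
  push_cast at hdvd
  refine ⟨eq_of_dvd_sub_mul_of_coprime hco hk hk' ?_,
    eq_of_dvd_sub_mul_of_coprime hco.symm hj hj' ?_⟩
  · have h := (dvd_mul_right (n : ℤ) m).trans hdvd
    simpa using (dvd_sub h (Dvd.intro ((j : ℤ) - j') (mul_comm _ _))).neg_right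
  · have h := (dvd_mul_left (m : ℤ) n).trans hdvd
    simpa using dvd_add h (Dvd.intro_left ((k : ℤ) - k') rfl)

lemma rotAbout_circle (O : ℂ) (r A α : ℝ) :
    rotAbout O α (O + r * Complex.exp (A * Complex.I))
      = O + r * Complex.exp (((A + α : ℝ) : ℂ) * Complex.I) := by
  simp only [rotAbout, add_sub_cancel_left, Complex.ofReal_add, add_mul, Complex.exp_add]
  ring

lemma exists_int_of_circle_eq {r : ℝ} (hr : r ≠ 0) {O : ℂ} {A B : ℝ}
    (h : O + r * Complex.exp (A * Complex.I) = O + r * Complex.exp (B * Complex.I)) :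
    ∃ N : ℤ, A = B + 2 * Real.pi * N := by
  obtain ⟨N, hN⟩ := Complex.exp_eq_exp_iff_exists_int.mp
    (mul_left_cancel₀ (Complex.ofReal_ne_zero.mpr hr) (add_left_cancel h))
  refine ⟨N, Complex.ofReal_injective (mul_right_cancel₀ Complex.I_ne_zero ?_)⟩
  push_cast
  linear_combination hN

lemma eq_of_rotAbout_mem_regularVerts {n m : ℕ} (hco : n.Coprime m) {O : ℂ} {r : ℝ}
    (hr : r ≠ 0) {θP θQ α : ℝ} {V V' W W' : ℂ}
    (hV : V ∈ regularVerts n O r θP) (hV' : V' ∈ regularVerts n O r θP)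
    (hW : W ∈ regularVerts m O r θQ) (hW' : W' ∈ regularVerts m O r θQ)
    (hVW : W = rotAbout O α V) (hVW' : W' = rotAbout O α V') :
    (V, W) = (V', W') := by
  obtain ⟨k, hk, rfl⟩ := hV
  obtain ⟨k', hk', rfl⟩ := hV'
  obtain ⟨j, hj, rfl⟩ := hW
  obtain ⟨j', hj', rfl⟩ := hW'
  rw [rotAbout_circle] at hVW hVW'
  obtain ⟨N, hN⟩ := exists_int_of_circle_eq hr hVW
  obtain ⟨N', hN'⟩ := exists_int_of_circle_eq hr hVW'
  have hn : (n : ℝ) ≠ 0 := Nat.cast_ne_zero.mpr (by omega)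
  have hm : (m : ℝ) ≠ 0 := Nat.cast_ne_zero.mpr (by omega)
  have hphase : ((((j : ℤ) - j') * n - ((k : ℤ) - k') * m : ℤ) : ℝ)
      = (((n * m : ℕ) : ℤ) * (N - N') : ℤ) := by
    have hπ : 2 * Real.pi ≠ 0 := by positivity
    refine mul_left_cancel₀ hπ ?_
    field_simp at hN hN'
    push_cast
    linear_combination hN - hN'
  obtain ⟨rfl, rfl⟩ := eq_and_eq_of_mul_dvd_of_coprime hco hk hk' hj hj'
    ⟨N - N', by exact_mod_cast hphase⟩
  rfl

theorem stmt3_general (n m : ℕ) (hgcd : Nat.gcd n m = 1)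
    (O : ℂ) (r : ℝ) (hr : 0 < r) (P Q : Set ℂ)
    (hP : IsRegularNGon n O r P) (hQ : IsRegularNGon m O r Q) :
    ¬ ∃ (V1 W1 V2 W2 V3 W3 : ℂ) (α : ℝ),
        V1 ∈ P ∧ W1 ∈ Q ∧ V2 ∈ P ∧ W2 ∈ Q ∧ V3 ∈ P ∧ W3 ∈ Q ∧
        (V1, W1) ≠ (V2, W2) ∧ (V1, W1) ≠ (V3, W3) ∧ (V2, W2) ≠ (V3, W3) ∧
        IsGap (P ∪ Q) O V1 W1 α ∧ IsGap (P ∪ Q) O V2 W2 α ∧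
        IsGap (P ∪ Q) O V3 W3 α := by
  obtain ⟨θP, rfl⟩ := hP
  obtain ⟨θQ, rfl⟩ := hQ
  rintro ⟨V1, W1, V2, W2, V3, W3, α, hV1, hW1, hV2, hW2, hV3, hW3, h12, h13, h23,
    ⟨-, -, -, -, -, g1⟩, ⟨-, -, -, -, -, g2⟩, ⟨-, -, -, -, -, g3⟩⟩
  have ccw {V V' W W'} := @eq_of_rotAbout_mem_regularVerts n m hgcd O r hr.ne' θP θQ α V V' W W'
  have cw {V V' W W'} hV hV' hW hW' hWV hWV' : (V, W) = (V', W') :=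
    Prod.swap_injective (@eq_of_rotAbout_mem_regularVerts m n (Nat.Coprime.symm hgcd) O r hr.ne'
      θQ θP α W W' V V' hW hW' hV hV' hWV hWV')
  rcases g1 with ⟨e1, -⟩ | ⟨e1, -⟩ <;> rcases g2 with ⟨e2, -⟩ | ⟨e2, -⟩ <;>
    rcases g3 with ⟨e3, -⟩ | ⟨e3, -⟩
  all_goals first
    | exact h12 (ccw hV1 hV2 hW1 hW2 e1 e2) | exact h12 (cw hV1 hV2 hW1 hW2 e1 e2)
    | exact h13 (ccw hV1 hV3 hW1 hW3 e1 e3) | exact h13 (cw hV1 hV3 hW1 hW3 e1 e3)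
    | exact h23 (ccw hV2 hV3 hW2 hW3 e2 e3) | exact h23 (cw hV2 hV3 hW2 hW3 e2 e3)

theorem stmt3 (n m : ℕ) (hn : 2 ≤ n) (hm : 2 ≤ m) (hgcd : Nat.gcd n m = 1)
    (O : ℂ) (r : ℝ) (hr : 0 < r) (P Q : Set ℂ)
    (hP : IsRegularNGon n O r P) (hQ : IsRegularNGon m O r Q) :
    ¬ ∃ (V1 W1 V2 W2 V3 W3 : ℂ) (α : ℝ),
        V1 ∈ P ∧ W1 ∈ Q ∧ V2 ∈ P ∧ W2 ∈ Q ∧ V3 ∈ P ∧ W3 ∈ Q ∧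
        (V1, W1) ≠ (V2, W2) ∧ (V1, W1) ≠ (V3, W3) ∧ (V2, W2) ≠ (V3, W3) ∧
        IsGap (P ∪ Q) O V1 W1 α ∧ IsGap (P ∪ Q) O V2 W2 α ∧
        IsGap (P ∪ Q) O V3 W3 α :=
  stmt3_general n m hgcd O r hr P Q hP hQ
end
end

section
/- (Solution of the First Step Problem.) For every n ≥ 3 there exists a function B̃ assigning a point of ℂ to every n-element subset S of ℂ whose points all lie on a common circle, such that for every such S, contained in the circle c with center O and radius r > 0, the following hold: (1) B̃(S) lies on c or B̃(S) = O; (2) B̃(S) = O if and only if some nontrivial rotation about O maps S onto itself; (3) B̃(f(S)) = f(B̃(S)) for every similarity f of the plane. -/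
noncomputable section

/-- A similarity of the plane: a bijection multiplying all distances by a fixed
positive ratio. -/
def IsSimilarity (f : ℂ → ℂ) : Prop :=
  Function.Bijective f ∧ ∃ r : ℝ, 0 < r ∧
    ∀ z w : ℂ, ‖f z - f w‖ = r * ‖z - w‖

/-!
Center the points at the circle's center and let `e_k` be their elementary symmetric functions.
A similarity `z ↦ a σ(z) + b`, with `σ` the identity or complex conjugation, multiplies `e_k` by
`a ^ k σ(·)`, and, since the points are the roots of the polynomial with coefficients `± e_k`, a
rotation by `u` fixes the set iff `u ^ k = 1` whenever `e_k ≠ 0`. Let `g` be the gcd of those `k`.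
If `g > 1`, a primitive `g`-th root of unity is a symmetry and we take `B = O`.
If `g = 1`, Bézout coefficients `∑ μ_k k = 1` make `∏ (e_k / |e_k|) ^ μ_k` a unit complex number
transforming by `(a / |a|) σ(·)`, exactly like a point of the unit circle, so
`B = O + r ∏ (e_k / |e_k|) ^ μ_k` commutes with similarities.
-/

open Polynomial Complex EuclideanGeometry

namespace Multiset

variable {R : Type*} [CommRing R]

theorem esymm_map_ringHom {S : Type*} [CommRing S] (φ : R →+* S) (s : Multiset R) (k : ℕ) :
    (s.map φ).esymm k = φ (s.esymm k) := by
  simp [esymm, powersetCard_map, map_multiset_sum, map_multiset_prod, map_map]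

theorem esymm_map_mul (u : R) (s : Multiset R) (k : ℕ) :
    (s.map (u * ·)).esymm k = u ^ k * s.esymm k := by
  simpa using (pow_smul_esymm u k s).symm

theorem esymm_card (s : Multiset R) : s.esymm (card s) = s.prod := by
  simp [esymm, powersetCard_self]

theorem esymm_eq_zero_of_card_lt {s : Multiset R} {k : ℕ} (h : card s < k) : s.esymm k = 0 := by
  simp [esymm, powersetCard_eq_empty _ h]

theorem eq_of_card_eq_of_esymm_eq [IsDomain R] {s t : Multiset R} (hc : card s = card t)
    (h : ∀ k, s.esymm k = t.esymm k) : s = t := by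
  have : (s.map fun r => X - C r).prod = (t.map fun r => X - C r).prod := by
    simp only [prod_X_sub_X_eq_sum_esymm, hc, h]
  simpa using congrArg Polynomial.roots this

open scoped Classical in
def esymmSupport (s : Multiset R) : Finset ℕ :=
  (Finset.range (card s + 1)).filter (s.esymm · ≠ 0)

theorem mem_esymmSupport {s : Multiset R} {k : ℕ} : k ∈ s.esymmSupport ↔ s.esymm k ≠ 0 := by
  simp only [esymmSupport, Finset.mem_filter, Finset.mem_range, and_iff_right_iff_imp]
  exact fun h => Nat.lt_succ_of_le (not_lt.1 fun hk => h (esymm_eq_zero_of_card_lt hk))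

theorem card_mem_esymmSupport [IsDomain R] {s : Multiset R} (hs : (0 : R) ∉ s) :
    card s ∈ s.esymmSupport := by
  rw [mem_esymmSupport, esymm_card]
  exact prod_ne_zero hs

theorem gcd_esymmSupport_ne_zero [IsDomain R] {s : Multiset R} (hs : (0 : R) ∉ s) (hne : s ≠ 0) :
    s.esymmSupport.gcd id ≠ 0 := fun h =>
  hne (card_eq_zero.1 ((Finset.gcd_eq_zero_iff.1 h) _ (card_mem_esymmSupport hs)))

theorem map_mul_eq_self_iff [IsDomain R] {s : Multiset R} {u : R} :
    s.map (u * ·) = s ↔ ∀ k ∈ s.esymmSupport, u ^ k = 1 := by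
  constructor
  · intro h k hk
    have hk' := mem_esymmSupport.1 hk
    have := esymm_map_mul u s k
    rw [h] at this
    exact (mul_eq_right₀ hk').1 this.symm
  · intro h
    refine eq_of_card_eq_of_esymm_eq (card_map _ _) fun k => ?_
    rw [esymm_map_mul]
    by_cases hk : s.esymm k = 0
    · rw [hk, mul_zero]
    · rw [h k (mem_esymmSupport.2 hk), one_mul]

end Multiset

namespace Finset

theorem gcd_natCast (K : Finset ℕ) : K.gcd (fun k => (k : ℤ)) = (K.gcd id : ℕ) := by
  induction K using Finset.induction_on with
  | empty => simp
  | insert a K _ ih =>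
    rw [gcd_insert, gcd_insert, ih, ← Int.coe_gcd, Int.gcd_natCast_natCast]
    rfl

def bezoutCoeff (K : Finset ℕ) : ℕ → ℤ :=
  (K.gcd_eq_sum_mul (fun k => (k : ℤ))).choose

theorem sum_mul_bezoutCoeff (K : Finset ℕ) :
    ∑ k ∈ K, (k : ℤ) * K.bezoutCoeff k = (K.gcd id : ℕ) := by
  rw [← gcd_natCast, (K.gcd_eq_sum_mul _).choose_spec]; rfl

theorem exists_pow_eq_one_iff_one_lt_gcd {K : Finset ℕ} (hK : K.gcd id ≠ 0) :
    (∃ u : ℂ, ‖u‖ = 1 ∧ u ≠ 1 ∧ ∀ k ∈ K, u ^ k = 1) ↔ 1 < K.gcd id := by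
  constructor
  · rintro ⟨u, -, hu1, hK1⟩
    have hdvd : orderOf u ∣ K.gcd id :=
      dvd_gcd fun k hk => orderOf_dvd_of_pow_eq_one (hK1 k hk)
    have h0 : orderOf u ≠ 0 := fun h => hK (Nat.eq_zero_of_zero_dvd (h ▸ hdvd))
    have h1 : orderOf u ≠ 1 := fun h => hu1 (orderOf_eq_one_iff.1 h)
    have := Nat.le_of_dvd (Nat.pos_of_ne_zero hK) hdvd
    omega
  · intro hg
    have hζ := Complex.isPrimitiveRoot_exp _ hK
    exact ⟨_, hζ.norm'_eq_one hK, hζ.ne_one hg,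
      fun k hk => (hζ.pow_eq_one_iff_dvd k).2 (gcd_dvd hk)⟩

end Finset

theorem Complex.norm_algHom_apply (σ : ℂ →ₐ[ℝ] ℂ) (z : ℂ) : ‖σ z‖ = ‖z‖ := by
  rcases real_algHom_eq_id_or_conj σ with rfl | rfl
  · rfl
  · exact norm_conj z

theorem prod_zpow_eq_zpow_sum {G ι : Type*} [CommGroupWithZero G] {u : G} (hu : u ≠ 0)
    (K : Finset ι) (f : ι → ℤ) : ∏ k ∈ K, u ^ f k = u ^ ∑ k ∈ K, f k := by
  classical
  induction K using Finset.induction_on with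
  | empty => simp
  | insert b K hb ih => rw [Finset.prod_insert hb, Finset.sum_insert hb, ih, zpow_add₀ hu]

def esymmPhase (s : Multiset ℂ) : ℂ :=
  ∏ k ∈ s.esymmSupport, (s.esymm k / ‖s.esymm k‖) ^ s.esymmSupport.bezoutCoeff k

theorem norm_esymmPhase (s : Multiset ℂ) : ‖esymmPhase s‖ = 1 := by
  refine (norm_prod _ _).trans (Finset.prod_eq_one fun k hk => ?_)
  rw [norm_zpow, norm_div, norm_real, norm_norm, div_self (norm_ne_zero_iff.2
    (Multiset.mem_esymmSupport.1 hk)), one_zpow]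

section Similarity

variable {a : ℂ} (σ : ℂ →ₐ[ℝ] ℂ) (s : Multiset ℂ)

theorem esymm_map_mul_algHom (k : ℕ) :
    (s.map fun t => a * σ t).esymm k = a ^ k * σ (s.esymm k) := by
  have := Multiset.esymm_map_mul a (s.map σ.toRingHom) k
  rwa [Multiset.map_map, Multiset.esymm_map_ringHom] at this

theorem esymmSupport_map_mul_algHom (ha : a ≠ 0) :
    (s.map fun t => a * σ t).esymmSupport = s.esymmSupport := by
  ext k
  simp [Multiset.mem_esymmSupport, esymm_map_mul_algHom, ha]

theorem esymmPhase_map_mul_algHom (ha : a ≠ 0) :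
    esymmPhase (s.map fun t => a * σ t) =
      (a / ‖a‖) ^ (s.esymmSupport.gcd id) * σ (esymmPhase s) := by
  have factor : ∀ k, ((s.map fun t => a * σ t).esymm k / ‖(s.map fun t => a * σ t).esymm k‖) =
      (a / ‖a‖) ^ k * σ (s.esymm k / ‖s.esymm k‖) := by
    intro k
    have : σ (‖s.esymm k‖ : ℂ) = ‖s.esymm k‖ := σ.commutes _
    rw [esymm_map_mul_algHom, norm_mul, norm_pow, Complex.norm_algHom_apply, map_div₀, this,
      div_pow]
    push_cast
    ring
  simp only [esymmPhase, esymmSupport_map_mul_algHom σ s ha, factor, mul_zpow, ← zpow_natCast,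
    ← zpow_mul, Finset.prod_mul_distrib, map_prod, map_zpow₀]
  rw [prod_zpow_eq_zpow_sum (div_ne_zero ha (by simpa using ha)), Finset.sum_mul_bezoutCoeff]

end Similarity

open scoped Classical in
def centered (S : Set ℂ) (O : ℂ) : Multiset ℂ :=
  if h : S.Finite then h.toFinset.val.map (· - O) else 0

section Centered

variable {S : Set ℂ} {O : ℂ}

theorem mem_centered (hS : S.Finite) {w : ℂ} : w ∈ centered S O ↔ w + O ∈ S := by
  simp only [centered, dif_pos hS, Multiset.mem_map, Finset.mem_val, Set.Finite.mem_toFinset]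
  exact ⟨by rintro ⟨z, hz, rfl⟩; simpa using hz, fun h => ⟨w + O, h, add_sub_cancel_right w O⟩⟩

theorem card_centered (hS : S.Finite) : Multiset.card (centered S O) = S.ncard := by
  simp [centered, hS, Set.ncard_eq_toFinset_card _ hS]

theorem zero_notMem_centered (hS : S.Finite) {r : ℝ} (hr : r ≠ 0) (hc : ∀ z ∈ S, ‖z - O‖ = r) :
    (0 : ℂ) ∉ centered S O := fun h => hr (by simpa using (hc _ ((mem_centered hS).1 h)).symm)

theorem centered_image (hS : S.Finite) {f φ : ℂ → ℂ} (hf : f.Injective) {O' : ℂ}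
    (hφ : ∀ z, f z - O' = φ (z - O)) :
    centered (f '' S) O' = (centered S O).map φ := by
  rw [centered, dif_pos (hS.image f), centered, dif_pos hS, Set.Finite.toFinset_image f hS,
    Finset.image_val_of_injOn hf.injOn, Multiset.map_map, Multiset.map_map]
  exact Multiset.map_congr rfl fun z _ => hφ z

theorem image_eq_self_iff_map_centered (hS : S.Finite) {f φ : ℂ → ℂ} (hf : f.Injective)
    (hφ : ∀ z, f z - O = φ (z - O)) : f '' S = S ↔ (centered S O).map φ = centered S O := by
  rw [← centered_image hS hf hφ]
  refine ⟨fun h => by rw [h], fun h => Set.ext fun z => ?_⟩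
  rw [← sub_add_cancel z O, ← mem_centered (hS.image f), h, mem_centered hS]

end Centered

theorem Complex.eq_of_mem_sphere_of_two_lt_ncard {S : Set ℂ} (hS : 2 < S.ncard)
    {c₁ c₂ : Sphere ℂ} (h₁ : ∀ z ∈ S, z ∈ c₁) (h₂ : ∀ z ∈ S, z ∈ c₂) : c₁ = c₂ := by
  obtain ⟨x, hx, y, hy, z, hz, hxy, hxz, hyz⟩ :=
    (Set.two_lt_ncard (Set.finite_of_ncard_pos (by omega))).1 hS
  by_contra hne
  rcases eq_of_mem_sphere_of_mem_sphere_of_finrank_eq_two Complex.finrank_real_complex hne hxy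
    (h₁ x hx) (h₁ y hy) (h₁ z hz) (h₂ x hx) (h₂ y hy) (h₂ z hz) with rfl | rfl
  · exact hxz rfl
  · exact hyz rfl

open scoped Classical in
def circumcircle (S : Set ℂ) : Sphere ℂ :=
  if h : ∃ c : Sphere ℂ, ∀ z ∈ S, z ∈ c then h.choose else ⟨0, 0⟩

theorem circumcircle_eq {S : Set ℂ} (hS : 2 < S.ncard) {O : ℂ} {r : ℝ}
    (hc : ∀ z ∈ S, ‖z - O‖ = r) : circumcircle S = ⟨O, r⟩ := by
  have hO : ∀ z ∈ S, z ∈ (⟨O, r⟩ : Sphere ℂ) := fun z hz => by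
    simpa [mem_sphere, dist_eq] using hc z hz
  have h : ∃ c : Sphere ℂ, ∀ z ∈ S, z ∈ c := ⟨_, hO⟩
  rw [circumcircle, dif_pos h]
  exact Complex.eq_of_mem_sphere_of_two_lt_ncard hS h.choose_spec hO

theorem IsSimilarity.exists_eq_mul_algHom_add {f : ℂ → ℂ} (hf : IsSimilarity f) :
    ∃ a : ℂ, a ≠ 0 ∧ ∃ b : ℂ, ∃ σ : ℂ →ₐ[ℝ] ℂ, ∀ z, f z = a * σ z + b := by
  obtain ⟨hbij, r, hr, hd⟩ := hf
  have hr' : (r : ℂ) ≠ 0 := by exact_mod_cast hr.ne'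
  let g : ℂ ≃ᵢ ℂ :=
    { toEquiv := (Equiv.ofBijective f hbij).trans (Equiv.divRight₀ r hr')
      isometry_toFun := Isometry.of_dist_eq fun z w => by
        simp [dist_eq, Equiv.divRight₀, ← sub_div, hd, abs_of_pos hr, hr.ne'] }
  have hg : ∀ z, f z = r * (g.toRealLinearIsometryEquiv z) + f 0 := fun z => by
    simp [g, Equiv.divRight₀]
    field_simp
    ring
  obtain ⟨c, hL | hL⟩ := linear_isometry_complex g.toRealLinearIsometryEquiv
  · exact ⟨r * c, by simp [hr'], f 0, AlgHom.id ℝ ℂ, fun z => by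
      rw [hg, hL, rotation_apply, AlgHom.id_apply, mul_assoc]⟩
  · exact ⟨r * c, by simp [hr'], f 0, conjAe, fun z => by
      rw [hg, hL]; simp [rotation_apply, mul_assoc]⟩

def firstStepPoint (S : Set ℂ) : ℂ :=
  let c := circumcircle S
  if 1 < (centered S c.center).esymmSupport.gcd id then c.center
  else c.center + c.radius * esymmPhase (centered S c.center)

section OnCircle

variable {S : Set ℂ} {O : ℂ} {r : ℝ}

theorem gcd_esymmSupport_centered_ne_zero (hS : 0 < S.ncard) (hr : r ≠ 0)
    (hc : ∀ z ∈ S, ‖z - O‖ = r) : (centered S O).esymmSupport.gcd id ≠ 0 := by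
  have hfin : S.Finite := Set.finite_of_ncard_pos hS
  exact Multiset.gcd_esymmSupport_ne_zero (zero_notMem_centered hfin hr hc)
    (Multiset.card_pos.1 (by rwa [card_centered hfin]))

theorem image_rotation_eq_self_iff (hS : S.Finite) {u : ℂ} (hu : u ≠ 0) :
    (fun z => O + u * (z - O)) '' S = S ↔ ∀ k ∈ (centered S O).esymmSupport, u ^ k = 1 := by
  rw [image_eq_self_iff_map_centered hS (φ := (u * ·)) (fun z w h => by simpa [hu] using h)
    fun z => by ring, Multiset.map_mul_eq_self_iff]

theorem firstStepPoint_eq (hS : 2 < S.ncard) (hc : ∀ z ∈ S, ‖z - O‖ = r) :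
    firstStepPoint S = if 1 < (centered S O).esymmSupport.gcd id then O
      else O + r * esymmPhase (centered S O) := by
  simp only [firstStepPoint, circumcircle_eq hS hc]

theorem firstStepPoint_eq_center_iff (hS : 2 < S.ncard) (hr : r ≠ 0)
    (hc : ∀ z ∈ S, ‖z - O‖ = r) :
    firstStepPoint S = O ↔ 1 < (centered S O).esymmSupport.gcd id := by
  rw [firstStepPoint_eq hS hc]
  split_ifs with h
  · simp [h]
  · simp [h, hr, ← norm_ne_zero_iff, norm_esymmPhase]

theorem firstStepPoint_image (hS : 2 < S.ncard) (hr : r ≠ 0) (hc : ∀ z ∈ S, ‖z - O‖ = r)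
    {a b : ℂ} (ha : a ≠ 0) (σ : ℂ →ₐ[ℝ] ℂ) {f : ℂ → ℂ} (hf : ∀ z, f z = a * σ z + b) :
    firstStepPoint (f '' S) = f (firstStepPoint S) := by
  have hfin : S.Finite := Set.finite_of_ncard_pos (by omega)
  have hσ : ∀ z w, f z - f w = a * σ (z - w) := fun z w => by rw [hf, hf, map_sub]; ring
  have hinj : f.Injective := fun z w h => by
    have : a * σ (z - w) = 0 := by rw [← hσ, h, sub_self]
    exact σ.toRingHom.injective (by simpa [ha, sub_eq_zero] using this)
  have hS' : 2 < (f '' S).ncard := by rwa [Set.ncard_image_of_injective _ hinj]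
  have hc' : ∀ z ∈ f '' S, ‖z - f O‖ = ‖a‖ * r := by
    rintro _ ⟨z, hz, rfl⟩
    rw [hσ, norm_mul, Complex.norm_algHom_apply, hc z hz]
  rw [firstStepPoint_eq hS' hc', firstStepPoint_eq hS hc,
    centered_image hfin hinj (φ := fun t => a * σ t) fun z => hσ z O,
    esymmSupport_map_mul_algHom σ _ ha]
  split_ifs with h
  · rfl
  · have hg : (centered S O).esymmSupport.gcd id = 1 := by
      have := gcd_esymmSupport_centered_ne_zero (by omega) hr hc
      omega
    have hσr : σ (r : ℂ) = r := σ.commutes r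
    rw [esymmPhase_map_mul_algHom σ _ ha, hg, pow_one, hf, hf, map_add, map_mul, hσr]
    have : (‖a‖ : ℂ) ≠ 0 := by simpa using ha
    field_simp
    push_cast
    ring

end OnCircle

/-- Solution of the First Step Problem: for every `n ≥ 3` there is a function
`B` on `n`-element subsets of ℂ lying on a common circle (center `O`,
radius `r`) such that `B S ∈ c ∪ {O}`, `B S = O` iff `S` is rotationally
symmetric about `O`, and `B` commutes with similarities. -/
theorem stmt4 (n : ℕ) (hn : 3 ≤ n) :
    ∃ B : Set ℂ → ℂ,
      ∀ (S : Set ℂ) (O : ℂ) (r : ℝ), S.ncard = n → 0 < r →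
        (∀ z ∈ S, ‖z - O‖ = r) →
        (‖B S - O‖ = r ∨ B S = O) ∧
        (B S = O ↔ ∃ u : ℂ, ‖u‖ = 1 ∧ u ≠ 1 ∧
            (fun z => O + u * (z - O)) '' S = S) ∧
        (∀ f : ℂ → ℂ, IsSimilarity f → B (f '' S) = f (B S)) := by
  refine ⟨firstStepPoint, fun S O r hcard hr hc => ⟨?_, ?_, fun f hf => ?_⟩⟩
  · rw [firstStepPoint_eq (by omega) hc]
    split_ifs
    · exact Or.inr rfl
    · left
      simp [norm_esymmPhase, hr.le]
  · rw [firstStepPoint_eq_center_iff (by omega) hr.ne' hc, ← Finset.exists_pow_eq_one_iff_one_lt_gcd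
      (gcd_esymmSupport_centered_ne_zero (by omega) hr.ne' hc)]
    refine exists_congr fun u => and_congr_right fun hu => and_congr_right fun _ => ?_
    exact (image_rotation_eq_self_iff (Set.finite_of_ncard_pos (by omega))
      (norm_ne_zero_iff.1 (hu ▸ one_ne_zero))).symm
  · obtain ⟨a, ha, b, σ, hfab⟩ := hf.exists_eq_mul_algHom_add
    exact firstStepPoint_image (by omega) hr.ne' hc ha σ hfab
end
end

section
/- For every n ≥ 3 there exists a function B̃* assigning a point of ℂ to every labelled n-element subset (S, ℓ), where S ⊂ ℂ is an n-element set whose points all lie on a common circle and ℓ : S → ℕ is a labelling of its points, such that for every such (S, ℓ), with S contained in the circle c with center O and radius r > 0, the following hold: (1) B̃*(S, ℓ) lies on c or B̃*(S, ℓ) = O; (2) B̃*(S, ℓ) = O if and only if there exists a nontrivial rotation T about O with T(S) = S and ℓ(T(v)) = ℓ(v) for all v ∈ S; (3) for every similarity f of the plane, B̃*(f(S), ℓ ∘ f⁻¹) = f(B̃*(S, ℓ)). -/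
/-!
Similarities act on labelled sets by `f • (S, ℓ) = (f '' S, ℓ ∘ f⁻¹)`. An equivariant choice of
`B` exists as soon as every concyclic labelled set `x` has an admissible point (on the circle,
and equal to the centre exactly when `x` has a nontrivial rotational symmetry) fixed by the
stabilizer of `x`: choose one on a representative of each orbit and transport it along the orbit.

A self-similarity of a set of at least three points on a circle preserves that circle, so it is a
rotation about the centre `O` or a reflection in a line through `O`. If `x` has a nontrivial
rotational symmetry, `O` is fixed by the whole stabilizer. Otherwise the stabilizer consists of
the identity and at most one reflection `z ↦ O + w² · conj (z - O)` (two of them would compose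
to a rotational symmetry), and `O + r w` lies on its axis.
-/

noncomputable section

open Function Set Metric Complex ComplexConjugate

theorem MulAction.exists_equivariant_selection {G X Y : Type*} [Group G] [MulAction G X]
    [MulAction G Y] [Nonempty Y] (Q : X → Prop) (P : X → Y → Prop)
    (hQ : ∀ (g : G) x, Q x → Q (g • x)) (hP : ∀ (g : G) x y, P x y → P (g • x) (g • y))
    (hfix : ∀ x, Q x → ∃ y, P x y ∧ ∀ g : G, g • x = x → g • y = y) :
    ∃ φ : X → Y, ∀ x, Q x → P x (φ x) ∧ ∀ g : G, φ (g • x) = g • φ x := by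
  let rep (x : X) : X := (Quotient.mk (orbitRel G X) x).out
  have rep_smul (g : G) (x : X) : rep (g • x) = rep x :=
    congrArg Quotient.out (Quotient.sound ⟨g, rfl⟩)
  have : ∀ x, ∃ g : G, g • x = rep x := fun x => Quotient.mk_out (s := orbitRel G X) x
  choose σ hσ using this
  let y₀ (x : X) : Y := Classical.epsilon fun y => P x y ∧ ∀ g : G, g • x = x → g • y = y
  refine ⟨fun x => (σ x)⁻¹ • y₀ (rep x), fun x hx => ?_⟩
  have hx_rep : (σ x)⁻¹ • rep x = x := by rw [← hσ x, inv_smul_smul]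
  obtain ⟨hPy, hfixy⟩ : P (rep x) (y₀ (rep x)) ∧
      ∀ g : G, g • rep x = rep x → g • y₀ (rep x) = y₀ (rep x) :=
    Classical.epsilon_spec (hfix _ (hσ x ▸ hQ (σ x) x hx))
  refine ⟨by simpa only [hx_rep] using hP (σ x)⁻¹ _ _ hPy, fun g => ?_⟩
  have hstab : (σ (g • x) * g * (σ x)⁻¹) • rep x = rep x := by
    rw [mul_smul, mul_smul, hx_rep, hσ, rep_smul]
  calc (σ (g • x))⁻¹ • y₀ (rep (g • x))
      = (σ (g • x))⁻¹ • (σ (g • x) * g * (σ x)⁻¹) • y₀ (rep x) := by rw [rep_smul, hfixy _ hstab]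
    _ = g • (σ x)⁻¹ • y₀ (rep x) := by simp only [smul_smul, mul_assoc, inv_mul_cancel_left]

theorem EuclideanGeometry.eq_of_three_le_ncard_subset_sphere {V P : Type*}
    [NormedAddCommGroup V] [InnerProductSpace ℝ V] [FiniteDimensional ℝ V] [MetricSpace P]
    [NormedAddTorsor V P] (hd : Module.finrank ℝ V = 2) {S : Set P} (hS : 3 ≤ S.ncard)
    {O O' : P} {r r' : ℝ} (h : S ⊆ sphere O r) (h' : S ⊆ sphere O' r') : O = O' ∧ r = r' := by
  obtain ⟨a, b, c, ha, hb, hc, hab, hac, hbc⟩ :=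
    (two_lt_ncard_iff (finite_of_ncard_pos (by omega))).1 hS
  by_contra hne
  have hs : (⟨O, r⟩ : Sphere P) ≠ ⟨O', r'⟩ := fun h => hne (by simpa using h)
  rcases eq_of_mem_sphere_of_mem_sphere_of_finrank_eq_two hd hs hab (h ha) (h hb) (h hc)
    (h' ha) (h' hb) (h' hc) with hca | hcb
  exacts [hac hca.symm, hbc hcb.symm]

namespace IsSimilarity

theorem comp {f g : ℂ → ℂ} (hg : IsSimilarity g) (hf : IsSimilarity f) :
    IsSimilarity (g ∘ f) := by
  obtain ⟨hg_bij, s, hs, hg_dist⟩ := hg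
  obtain ⟨hf_bij, r, hr, hf_dist⟩ := hf
  exact ⟨hg_bij.comp hf_bij, s * r, mul_pos hs hr, fun z w => by
    simp only [comp_apply, hg_dist, hf_dist, mul_assoc]⟩

theorem perm_symm {e : Equiv.Perm ℂ} (he : IsSimilarity e) : IsSimilarity e.symm := by
  obtain ⟨-, r, hr, hdist⟩ := he
  refine ⟨e.symm.bijective, r⁻¹, inv_pos.2 hr, fun z w => ?_⟩
  rw [eq_inv_mul_iff_mul_eq₀ hr.ne', ← hdist, e.apply_symm_apply, e.apply_symm_apply]

theorem exists_mem_sphere_iff {f : ℂ → ℂ} (hf : IsSimilarity f) :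
    ∃ k > 0, ∀ (c z : ℂ) (ρ : ℝ), f z ∈ sphere (f c) (k * ρ) ↔ z ∈ sphere c ρ := by
  obtain ⟨-, k, hk, hdist⟩ := hf
  exact ⟨k, hk, fun c z ρ => by
    rw [mem_sphere_iff_norm, mem_sphere_iff_norm, hdist, mul_right_inj' hk.ne']⟩

/-- By Mazur–Ulam the rescaled map `(f z - f 0) / k` is a real-linear isometry of `ℂ`, hence a
rotation, possibly after conjugation. -/
theorem exists_direct_or_opposite {f : ℂ → ℂ} (hf : IsSimilarity f) (c : ℂ) :
    ∃ a : ℂ, (∀ z, f z = f c + a * (z - c)) ∨ ∀ z, f z = f c + a * conj (z - c) := by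
  obtain ⟨hbij, k, hk, hdist⟩ := hf
  have hk' : (k : ℂ) ≠ 0 := ofReal_ne_zero.2 hk.ne'
  set g : ℂ → ℂ := fun z => (k : ℂ)⁻¹ * (f z - f 0) with hg
  have hg_bij : Bijective g :=
    ((Equiv.mulLeft₀ _ (inv_ne_zero hk')).bijective.comp
      (Equiv.subRight (f 0)).bijective).comp hbij
  have hg_isom : Isometry g := Isometry.of_dist_eq fun z w => by
    simp only [hg, dist_eq, ← mul_sub, sub_sub_sub_cancel_right, norm_mul, norm_inv, hdist,
      norm_real, Real.norm_of_nonneg hk.le, inv_mul_cancel_left₀ hk.ne']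
  let L := IsometryEquiv.toRealLinearIsometryEquivOfMapZero
    ⟨Equiv.ofBijective g hg_bij, hg_isom⟩ (show g 0 = 0 by simp [g])
  have hL (z : ℂ) : f z = f c + k * L (z - c) := by
    rw [map_sub]
    change f z = f c + k * (g z - g c)
    simp only [g, ← mul_sub, sub_sub_sub_cancel_right, mul_inv_cancel_left₀ hk']
    ring
  obtain ⟨a, ha | ha⟩ := linear_isometry_complex L
  · exact ⟨k * a, Or.inl fun z => by
      rw [hL, ha, rotation_apply, mul_assoc]⟩
  · exact ⟨k * a, Or.inr fun z => by
      rw [hL, ha, LinearIsometryEquiv.trans_apply, rotation_apply, conjLIE_apply, mul_assoc]⟩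

theorem exists_map_rotation {f : ℂ → ℂ} (hf : IsSimilarity f) {u : ℂ} (hu : ‖u‖ = 1)
    (hu₁ : u ≠ 1) (O : ℂ) :
    ∃ u' : ℂ, ‖u'‖ = 1 ∧ u' ≠ 1 ∧ ∀ z, f (O + u * (z - O)) = f O + u' * (f z - f O) := by
  obtain ⟨a, hf | hf⟩ := hf.exists_direct_or_opposite O
  · exact ⟨u, hu, hu₁, fun z => by rw [hf (O + _), hf z]; ring⟩
  · refine ⟨conj u, by rwa [norm_conj], fun h => hu₁ (by simpa using congrArg conj h),
      fun z => ?_⟩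
    rw [hf (O + _), hf z, add_sub_cancel_left, add_sub_cancel_left, map_mul]
    ring

theorem exists_rotation_or_reflection_of_image_eq {f : ℂ → ℂ} (hf : IsSimilarity f)
    {S : Set ℂ} (hS : 3 ≤ S.ncard) {O : ℂ} {r : ℝ} (hr : 0 < r) (hSO : S ⊆ sphere O r)
    (himage : f '' S = S) :
    ∃ u : ℂ, ‖u‖ = 1 ∧ ((∀ z, f z = O + u * (z - O)) ∨ ∀ z, f z = O + u * conj (z - O)) := by
  obtain ⟨a, hform⟩ := hf.exists_direct_or_opposite O
  have hnorm (z : ℂ) : ‖f z - f O‖ = ‖a‖ * ‖z - O‖ := by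
    rcases hform with h | h <;> rw [h z, add_sub_cancel_left, norm_mul]
    rw [norm_conj]
  have himage_sphere : S ⊆ sphere (f O) (‖a‖ * r) := by
    rw [← himage]
    rintro _ ⟨z, hz, rfl⟩
    rw [mem_sphere_iff_norm, hnorm, mem_sphere_iff_norm.1 (hSO hz)]
  obtain ⟨hfO, hra⟩ :=
    EuclideanGeometry.eq_of_three_le_ncard_subset_sphere finrank_real_complex hS hSO
      himage_sphere
  refine ⟨a, ?_, by rwa [← hfO] at hform⟩
  exact (mul_eq_right₀ hr.ne').1 hra.symm

end IsSimilarity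

def similarityGroup : Subgroup (Equiv.Perm ℂ) where
  carrier := {e | IsSimilarity e}
  one_mem' := ⟨bijective_id, 1, one_pos, fun _ _ => (one_mul _).symm⟩
  mul_mem' := IsSimilarity.comp
  inv_mem' := IsSimilarity.perm_symm

open scoped Pointwise

attribute [local instance] arrowAction

theorem similarityGroup_smul_labelled (g : similarityGroup) (x : Set ℂ × (ℂ → ℕ)) :
    g • x = ((g : Equiv.Perm ℂ) '' x.1, x.2 ∘ (g : Equiv.Perm ℂ).symm) := rfl

def HasRotationalSymmetry (x : Set ℂ × (ℂ → ℕ)) (O : ℂ) : Prop :=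
  ∃ u : ℂ, ‖u‖ = 1 ∧ u ≠ 1 ∧ (fun z => O + u * (z - O)) '' x.1 = x.1 ∧
    ∀ v ∈ x.1, x.2 (O + u * (v - O)) = x.2 v

theorem HasRotationalSymmetry.map {x : Set ℂ × (ℂ → ℕ)} {O : ℂ} (h : HasRotationalSymmetry x O)
    {g : Equiv.Perm ℂ} (hg : IsSimilarity g) :
    HasRotationalSymmetry (g '' x.1, x.2 ∘ g.symm) (g O) := by
  obtain ⟨u, hu, hu₁, himage, hlabel⟩ := h
  obtain ⟨u', hu', hu'₁, hconj⟩ := hg.exists_map_rotation hu hu₁ O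
  refine ⟨u', hu', hu'₁, ?_, ?_⟩
  · rw [← image_comp, show (fun z => g O + u' * (z - g O)) ∘ g = g ∘ fun z => O + u * (z - O)
      from funext fun z => (hconj z).symm, image_comp, himage]
  · rintro _ ⟨v, hv, rfl⟩
    simp only [comp_apply, ← hconj, Equiv.symm_apply_apply, hlabel v hv]

theorem hasRotationalSymmetry_smul_iff {x : Set ℂ × (ℂ → ℕ)} {O : ℂ} (g : similarityGroup) :
    HasRotationalSymmetry (g • x) (g • O) ↔ HasRotationalSymmetry x O := by
  have hsmul (g : similarityGroup) {x O} (h : HasRotationalSymmetry x O) :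
      HasRotationalSymmetry (g • x) (g • O) := h.map g.2
  exact ⟨fun h => by simpa using hsmul g⁻¹ h, hsmul g⟩

theorem hasRotationalSymmetry_of_smul_eq {x : Set ℂ × (ℂ → ℕ)} {g : similarityGroup}
    (hg : g • x = x) {O u : ℂ} (hu : ‖u‖ = 1) (hu₁ : u ≠ 1) (hgu : ∀ z, g • z = O + u * (z - O)) :
    HasRotationalSymmetry x O := by
  simp only [similarityGroup_smul_labelled, Prod.ext_iff] at hg
  have hrot : (fun z => O + u * (z - O)) = (g : Equiv.Perm ℂ) := funext fun z => (hgu z).symm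
  refine ⟨u, hu, hu₁, hrot ▸ hg.1, fun v _ => ?_⟩
  have hlabel := congrFun hg.2 (g • v)
  rw [comp_apply, Subgroup.smul_def, Equiv.Perm.smul_def, Equiv.symm_apply_apply] at hlabel
  rw [← hgu v, hlabel, Subgroup.smul_def, Equiv.Perm.smul_def]

theorem reflection_unique {x : Set ℂ × (ℂ → ℕ)} {O : ℂ} (hrot : ¬HasRotationalSymmetry x O)
    {g g₀ : similarityGroup} (hg : g • x = x) (hg₀ : g₀ • x = x) {u u₀ : ℂ} (hu : ‖u‖ = 1)
    (hu₀ : ‖u₀‖ = 1) (hgu : ∀ z : ℂ, g • z = O + u * conj (z - O))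
    (hg₀u : ∀ z : ℂ, g₀ • z = O + u₀ * conj (z - O)) : u = u₀ := by
  have hcomp (z : ℂ) : (g * g₀) • z = O + u * conj u₀ * (z - O) := by
    rw [mul_smul, hg₀u, hgu, add_sub_cancel_left, map_mul, conj_conj]
    ring
  have hu₀u : u * conj u₀ = 1 := by_contra fun h => hrot <|
    hasRotationalSymmetry_of_smul_eq (by rw [mul_smul, hg₀, hg]) (by simp [hu, hu₀]) h hcomp
  have hu₀_conj : conj u₀ * u₀ = 1 := by simp [conj_mul', hu₀]
  linear_combination u₀ * hu₀u - u * hu₀_conj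

section Stabilizer

variable {x : Set ℂ × (ℂ → ℕ)} (hx : 3 ≤ x.1.ncard) {O : ℂ} {r : ℝ} (hr : 0 < r)
  (hxO : x.1 ⊆ sphere O r)
include hx hr hxO

theorem eq_one_or_reflection_of_smul_eq (hrot : ¬HasRotationalSymmetry x O)
    {g : similarityGroup} (hg : g • x = x) :
    (∀ z : ℂ, g • z = z) ∨ ∃ u : ℂ, ‖u‖ = 1 ∧ ∀ z, g • z = O + u * conj (z - O) := by
  obtain ⟨u, hu, hgu | hgu⟩ :=
    g.2.exists_rotation_or_reflection_of_image_eq hx hr hxO (congrArg Prod.fst hg)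
  · obtain rfl : u = 1 := by_contra fun hu₁ => hrot (hasRotationalSymmetry_of_smul_eq hg hu hu₁ hgu)
    exact Or.inl fun z => (hgu z).trans (by ring)
  · exact Or.inr ⟨u, hu, hgu⟩

theorem exists_point_fixed_by_stabilizer :
    ∃ y : ℂ, (y ∈ sphere O r ∨ y = O) ∧ (y = O ↔ HasRotationalSymmetry x O) ∧
      ∀ g : similarityGroup, g • x = x → g • y = y := by
  by_cases hrot : HasRotationalSymmetry x O
  · refine ⟨O, Or.inr rfl, iff_of_true rfl hrot, fun g hg => ?_⟩
    obtain ⟨u, -, hgu | hgu⟩ :=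
      g.2.exists_rotation_or_reflection_of_image_eq hx hr hxO (congrArg Prod.fst hg) <;>
    exact (hgu O).trans (by simp)
  obtain ⟨w, hw, hreflection⟩ : ∃ w : ℂ, ‖w‖ = 1 ∧ ∀ g : similarityGroup, g • x = x →
      ∀ u : ℂ, ‖u‖ = 1 → (∀ z : ℂ, g • z = O + u * conj (z - O)) → u = w ^ 2 := by
    by_cases hrefl : ∃ g : similarityGroup, g • x = x ∧
        ∃ u : ℂ, ‖u‖ = 1 ∧ ∀ z : ℂ, g • z = O + u * conj (z - O)
    · obtain ⟨g₀, hg₀, u₀, hu₀, hg₀u⟩ := hrefl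
      obtain ⟨w, hw⟩ := IsAlgClosed.exists_pow_nat_eq u₀ two_pos
      refine ⟨w, ?_, fun g hg u hu hgu => hw ▸ reflection_unique hrot hg hg₀ hu hu₀ hgu hg₀u⟩
      rw [← pow_eq_one_iff_of_nonneg (norm_nonneg w) two_ne_zero, ← norm_pow, hw, hu₀]
    · exact ⟨1, norm_one, fun g hg u hu hgu => absurd ⟨g, hg, u, hu, hgu⟩ hrefl⟩
  have hw_conj : w * conj w = 1 := by simp [mul_conj', hw]
  refine ⟨O + r * w, Or.inl ?_, iff_of_false (fun h => ?_) hrot, fun g hg => ?_⟩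
  · simp [mem_sphere_iff_norm, hw, abs_of_pos hr]
  · simp [hr.ne', ne_zero_of_norm_ne_zero (hw.trans_ne one_ne_zero)] at h
  · rcases eq_one_or_reflection_of_smul_eq hx hr hxO hrot hg with hg₁ | ⟨u, hu, hgu⟩
    · exact hg₁ _
    · rw [hgu, hreflection g hg u hu hgu, add_sub_cancel_left, map_mul, conj_ofReal]
      linear_combination r * w * hw_conj

end Stabilizer

def SpansCircle (S : Set ℂ) : Prop :=
  3 ≤ S.ncard ∧ ∃ O : ℂ, ∃ r > 0, S ⊆ sphere O r

theorem SpansCircle.image {S : Set ℂ} (hS : SpansCircle S) {f : ℂ → ℂ} (hf : IsSimilarity f) :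
    SpansCircle (f '' S) := by
  obtain ⟨hcard, O, r, hr, hSO⟩ := hS
  obtain ⟨k, hk, hsphere⟩ := hf.exists_mem_sphere_iff
  refine ⟨(ncard_image_of_injective S hf.1.1).symm ▸ hcard, f O, k * r, mul_pos hk hr, ?_⟩
  rintro _ ⟨z, hz, rfl⟩
  exact (hsphere O z r).2 (hSO hz)

def IsCanonicalPoint (x : Set ℂ × (ℂ → ℕ)) (y : ℂ) : Prop :=
  ∀ (O : ℂ) (r : ℝ), 0 < r → x.1 ⊆ sphere O r →
    (y ∈ sphere O r ∨ y = O) ∧ (y = O ↔ HasRotationalSymmetry x O)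

theorem IsCanonicalPoint.smul {x : Set ℂ × (ℂ → ℕ)} {y : ℂ} (h : IsCanonicalPoint x y)
    (g : similarityGroup) : IsCanonicalPoint (g • x) (g • y) := by
  intro O r hr hxO
  obtain ⟨O, rfl⟩ : ∃ O', O = g • O' := ⟨g⁻¹ • O, (smul_inv_smul g O).symm⟩
  obtain ⟨k, hk, hsphere⟩ := IsSimilarity.exists_mem_sphere_iff g.2
  have hrk : k * (r / k) = r := mul_div_cancel₀ r hk.ne'
  have hxO' : x.1 ⊆ sphere O (r / k) := fun z hz =>
    (hsphere O z _).1 (by rw [hrk]; exact hxO ⟨z, hz, rfl⟩)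
  obtain ⟨hmem, hcenter⟩ := h O _ (div_pos hr hk) hxO'
  refine ⟨hmem.imp (fun hy => ?_) (congrArg (g • ·)), ?_⟩
  · rw [← hrk]
    exact (hsphere O y _).2 hy
  · rw [smul_left_cancel_iff, hasRotationalSymmetry_smul_iff, hcenter]

theorem exists_isCanonicalPoint_fixed {x : Set ℂ × (ℂ → ℕ)} (hx : SpansCircle x.1) :
    ∃ y, IsCanonicalPoint x y ∧ ∀ g : similarityGroup, g • x = x → g • y = y := by
  obtain ⟨hcard, O, r, hr, hxO⟩ := hx
  obtain ⟨y, hmem, hcenter, hfixed⟩ := exists_point_fixed_by_stabilizer hcard hr hxO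
  refine ⟨y, fun O' r' _ hxO' => ?_, hfixed⟩
  obtain ⟨rfl, rfl⟩ := EuclideanGeometry.eq_of_three_le_ncard_subset_sphere
    finrank_real_complex hcard hxO hxO'
  exact ⟨hmem, hcenter⟩

/-- Labelled version of the First Step Problem: for every `n ≥ 3` there is a
function `B` on labelled `n`-element subsets `(S, ℓ)` of ℂ lying on a common
circle (center `O`, radius `r`) such that `B S ℓ ∈ c ∪ {O}`, `B S ℓ = O` iff
some nontrivial rotation about `O` maps `S` onto itself preserving labels, and
`B` commutes with similarities (a similarity `f` acting on the labelled set
`(S, ℓ)` gives `(f '' S, ℓ ∘ f⁻¹)`). -/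
theorem stmt5 (n : ℕ) (hn : 3 ≤ n) :
    ∃ B : Set ℂ → (ℂ → ℕ) → ℂ,
      ∀ (S : Set ℂ) (ℓ : ℂ → ℕ) (O : ℂ) (r : ℝ), S.ncard = n → 0 < r →
        (∀ z ∈ S, ‖z - O‖ = r) →
        (‖B S ℓ - O‖ = r ∨ B S ℓ = O) ∧
        (B S ℓ = O ↔ ∃ u : ℂ, ‖u‖ = 1 ∧ u ≠ 1 ∧
            (fun z => O + u * (z - O)) '' S = S ∧
            ∀ v ∈ S, ℓ (O + u * (v - O)) = ℓ v) ∧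
        (∀ f : ℂ → ℂ, IsSimilarity f →
          B (f '' S) (ℓ ∘ Function.invFun f) = f (B S ℓ)) := by
  obtain ⟨φ, hφ⟩ := MulAction.exists_equivariant_selection (G := similarityGroup)
    (fun x => SpansCircle x.1) IsCanonicalPoint (fun g _ hx => hx.image g.2)
    (fun g _ _ h => h.smul g) (fun _ hx => exists_isCanonicalPoint_fixed hx)
  refine ⟨fun S ℓ => φ (S, ℓ), fun S ℓ O r hcard hr hcirc => ?_⟩
  have hSO : S ⊆ sphere O r := fun z hz => mem_sphere_iff_norm.2 (hcirc z hz)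
  obtain ⟨hcanonical, hequivariant⟩ := hφ (S, ℓ) ⟨hcard ▸ hn, O, r, hr, hSO⟩
  obtain ⟨hmem, hcenter⟩ := hcanonical O r hr hSO
  refine ⟨hmem.imp_left mem_sphere_iff_norm.1, hcenter, fun f hf => ?_⟩
  have hinv : invFun f = (Equiv.ofBijective f hf.1).symm :=
    invFun_eq_of_injective_of_rightInverse hf.1.1 (Equiv.ofBijective f hf.1).apply_symm_apply
  rw [hinv]
  exact hequivariant ⟨Equiv.ofBijective f hf.1, hf⟩
end
end

section
/- (Existence of the center of axial asymmetry for multisets.) For every n ≥ 1 there exist n-multiset centers X̃ and Ỹ, both defined on the family of all n-multisets of points of ℂ, such that for every n-multiset P: (a) X̃(P) equals the centroid of P if and only if Fix(P) consists of exactly one point; and (b) the three points centroid(P), X̃(P), Ỹ(P) are pairwise distinct and not collinear if and only if Fix(P) = ℂ (equivalently, the only symmetry of P is the identity). -/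
noncomputable section

/-- An isometry of the plane: a similarity with ratio 1. -/
def IsPlaneIsometry (f : ℂ → ℂ) : Prop :=
  Function.Bijective f ∧ ∀ z w : ℂ, ‖f z - f w‖ = ‖z - w‖

/-- The set of points fixed by every symmetry of the multiset `P`. -/
def FixMultiset (P : Multiset ℂ) : Set ℂ :=
  {x | ∀ T : ℂ → ℂ, IsPlaneIsometry T → Multiset.map T P = P → T x = x}

/-!
Let the similarity group act on multisets and on `ℂ × ℂ`. A similarity fixing a multiset `P`
fixes `Fix P` pointwise: either `P` has two distinct points, and then preserving its diameter
forces the similarity to be an isometry, or `P` is concentrated at a point `a`, and then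
`Fix P = {a}` because of the point reflection at `a`. Hence one may choose a suitable pair of
points of `Fix P` on one representative of each similarity class and transport it to the rest
of the class; the choice of the transporting similarity does not matter. The required
properties are invariant because similarities are affine, hence preserve centroids and
collinearity, and conjugate symmetries into symmetries.
-/

open Dilation

theorem exists_equivariant_selection {G α β : Type*} [Group G] [MulAction G α]
    [MulAction G β] [Nonempty β] (R : α → β → Prop)
    (hR : ∀ (g : G) a b, R a b → R (g • a) (g • b))
    (hstab : ∀ (g : G) a b, R a b → g • a = a → g • b = b) :
    ∃ Z : α → β, ∀ a, (∃ b, R a b) →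
      R a (Z a) ∧ ∀ g : G, Z (g • a) = g • Z a := by
  let rep : α → α := fun a => (Quotient.mk (MulAction.orbitRel G α) a).out
  have rep_smul : ∀ (g : G) a, rep (g • a) = rep a := fun g a =>
    congrArg Quotient.out (Quotient.sound ⟨g, rfl⟩)
  have hrep : ∀ a, ∃ σ : G, σ • rep a = a := fun a =>
    (MulAction.orbitRel G α).symm (Quotient.mk_out (s := MulAction.orbitRel G α) a)
  choose σ hσ using hrep
  let c : α → β := fun a => Classical.epsilon (R (rep a))
  refine ⟨fun a => σ a • c a, fun a ⟨b, hb⟩ => ?_⟩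
  have hc : R (rep a) (c a) := Classical.epsilon_spec ⟨(σ a)⁻¹ • b, by
    simpa only [inv_smul_eq_iff.2 (hσ a).symm] using hR (σ a)⁻¹ a b hb⟩
  refine ⟨by simpa only [hσ a] using hR (σ a) _ _ hc, fun g => ?_⟩
  have hcg : c (g • a) = c a := by simp only [c, rep_smul]
  have hfix : ((σ (g • a))⁻¹ * g * σ a) • rep a = rep a := by
    rw [mul_smul, mul_smul, hσ a, inv_smul_eq_iff, ← rep_smul g a, hσ]
  have hfixc := hstab _ _ _ hc hfix
  rw [mul_smul, mul_smul, inv_smul_eq_iff] at hfixc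
  simp only [hcg, hfixc]

instance DilationEquiv.applyMulAction {X : Type*} [PseudoEMetricSpace X] :
    MulAction (X ≃ᵈ X) X :=
  MulAction.compHom X DilationEquiv.toPerm

instance DilationEquiv.multisetMulAction {X : Type*} [PseudoEMetricSpace X] :
    MulAction (X ≃ᵈ X) (Multiset X) where
  smul e P := P.map e
  one_smul := Multiset.map_id
  mul_smul e e' P := (Multiset.map_map e e' P).symm

theorem DilationEquiv.smul_def {X : Type*} [PseudoEMetricSpace X] (e : X ≃ᵈ X) (x : X) :
    e • x = e x := rfl

theorem DilationEquiv.smul_multiset_def {X : Type*} [PseudoEMetricSpace X] (e : X ≃ᵈ X)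
    (P : Multiset X) : e • P = P.map e := rfl

theorem Dilation.ratio_eq_one_of_image_eq {α F : Type*} [MetricSpace α] [FunLike F α α]
    [DilationClass F α α] (f : F) {s : Set α} (hs : s.Nontrivial)
    (hb : Bornology.IsBounded s) (hfs : f '' s = s) : ratio f = 1 := by
  have hpos := Metric.diam_pos hs hb
  have := diam_image f s
  rw [hfs] at this
  exact NNReal.coe_eq_one.1 (by nlinarith)

theorem DilationEquiv.exists_affineMap_coe_eq {E F : Type*} [NormedAddCommGroup E]
    [NormedSpace ℝ E] [NormedAddCommGroup F] [NormedSpace ℝ F] (e : E ≃ᵈ F) :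
    ∃ A : E →ᵃ[ℝ] F, ⇑A = e := by
  set r : ℝ := (ratio e : ℝ)
  have hr : r ≠ 0 := NNReal.coe_ne_zero.2 (ratio_ne_zero e)
  -- `r⁻¹ • e` is an isometry, hence affine by Mazur–Ulam.
  let I : E ≃ᵢ F := IsometryEquiv.mk' (fun x => r⁻¹ • e x) (fun y => e.symm (r • y))
    (fun y => by simp [smul_smul, hr]) (Isometry.of_dist_eq fun x y => by
      rw [dist_smul₀, Dilation.dist_eq, Real.norm_eq_abs, abs_inv,
        abs_of_pos (ratio_pos e), ← mul_assoc, inv_mul_cancel₀ hr, one_mul])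
  refine ⟨r • I.toRealAffineIsometryEquiv.toAffineEquiv.toAffineMap, funext fun x => ?_⟩
  change r • (r⁻¹ • e x) = e x
  rw [smul_smul, mul_inv_cancel₀ hr, one_smul]

theorem AffineMap.inv_card_smul_sum_map {k V₁ V₂ : Type*} [Field k] [AddCommGroup V₁]
    [Module k V₁] [AddCommGroup V₂] [Module k V₂] (A : V₁ →ᵃ[k] V₂) {P : Multiset V₁}
    (hP : (Multiset.card P : k) ≠ 0) :
    (Multiset.card P : k)⁻¹ • (P.map A).sum = A ((Multiset.card P : k)⁻¹ • P.sum) := by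
  rw [A.decomp]
  simp only [Pi.add_apply, Multiset.sum_map_add, Multiset.map_const', Multiset.sum_replicate,
    smul_add, ← map_multiset_sum, map_smul, ← Nat.cast_smul_eq_nsmul k, smul_smul,
    inv_mul_cancel₀ hP, one_smul]

theorem AffineMap.collinear_triple_iff {k V₁ V₂ P₁ P₂ : Type*} [DivisionRing k]
    [AddCommGroup V₁] [Module k V₁] [AddTorsor V₁ P₁] [AddCommGroup V₂] [Module k V₂]
    [AddTorsor V₂ P₂] (A : P₁ →ᵃ[k] P₂) (hA : Function.Injective A) (a b c : P₁) :
    Collinear k ({A a, A b, A c} : Set P₂) ↔ Collinear k ({a, b, c} : Set P₁) := by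
  rw [← not_iff_not, ← affineIndependent_iff_not_collinear_set,
    ← affineIndependent_iff_not_collinear_set, ← A.affineIndependent_iff hA]
  refine iff_of_eq (congrArg _ ?_)
  ext i; fin_cases i <;> rfl

theorem Set.exists_mem_eq_iff_exists_eq_singleton {α : Type*} {s : Set α} {c : α}
    (hc : c ∈ s) : ∃ x ∈ s, (x = c ↔ ∃ z, s = {z}) := by
  rcases Set.Nonempty.exists_eq_singleton_or_nontrivial ⟨c, hc⟩ with hs | hs
  · exact ⟨c, hc, iff_of_true rfl hs⟩
  · obtain ⟨x, hx, hxc⟩ := hs.exists_ne c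
    exact ⟨x, hx, iff_of_false hxc fun ⟨z, hz⟩ =>
      hs.not_subsingleton (hz ▸ Set.subsingleton_singleton)⟩

theorem Complex.not_collinear_add_one_add_I (c : ℂ) :
    ¬ Collinear ℝ ({c, c + 1, c + I} : Set ℂ) := by
  rw [collinear_iff_of_mem (Set.mem_insert c _)]
  rintro ⟨v, hv⟩
  obtain ⟨t, ht⟩ := hv (c + 1) (by simp)
  obtain ⟨u, hu⟩ := hv (c + I) (by simp)
  simp only [vadd_eq_add, Complex.ext_iff, real_smul, add_re, add_im, one_re, one_im, I_re,
    I_im, re_ofReal_mul, im_ofReal_mul] at ht hu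
  have : (1 : ℝ) = 0 := by
    linear_combination ht.1 + t * v.re * hu.2 - u * v.re * ht.2
  exact one_ne_zero this

def IsSimilarity.toDilationEquiv {f : ℂ → ℂ} (hf : IsSimilarity f) : ℂ ≃ᵈ ℂ :=
  { Equiv.ofBijective f hf.1 with
    edist_eq' := by
      obtain ⟨r, hr, hfr⟩ := hf.2
      refine (Dilation.mkOfDistEq f ⟨⟨r, hr.le⟩, fun h => hr.ne' (congrArg NNReal.toReal h),
        fun z w => ?_⟩).edist_eq'
      rw [Complex.dist_eq, Complex.dist_eq]
      exact hfr z w }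

@[simp]
theorem IsSimilarity.coe_toDilationEquiv {f : ℂ → ℂ} (hf : IsSimilarity f) :
    ⇑hf.toDilationEquiv = f := rfl

theorem IsPlaneIsometry.isSimilarity {T : ℂ → ℂ} (hT : IsPlaneIsometry T) : IsSimilarity T :=
  ⟨hT.1, 1, one_pos, by simpa only [one_mul] using hT.2⟩

theorem DilationEquiv.isPlaneIsometry {e : ℂ ≃ᵈ ℂ} (he : ratio e = 1) : IsPlaneIsometry e :=
  ⟨e.bijective, fun z w => by
    simpa only [Complex.dist_eq, he, NNReal.coe_one, one_mul] using Dilation.dist_eq e z w⟩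

theorem IsPlaneIsometry.conj {T : ℂ → ℂ} (hT : IsPlaneIsometry T) (e : ℂ ≃ᵈ ℂ) :
    IsPlaneIsometry (e.symm ∘ T ∘ e) := by
  refine ⟨e.symm.bijective.comp (hT.1.comp e.bijective), fun z w => ?_⟩
  have hr : (ratio e : ℝ) ≠ 0 := NNReal.coe_ne_zero.2 (ratio_ne_zero e)
  simp only [Function.comp_apply, ← Complex.dist_eq]
  rw [Dilation.dist_eq, DilationEquiv.ratio_symm, Complex.dist_eq, hT.2, ← Complex.dist_eq,
    Dilation.dist_eq, NNReal.coe_inv]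
  field_simp

theorem DilationEquiv.centroid_map (e : ℂ ≃ᵈ ℂ) {P : Multiset ℂ} {n : ℕ}
    (hP : Multiset.card P = n) (hn : n ≠ 0) :
    (P.map e).sum / n = e (P.sum / n) := by
  obtain ⟨A, hA⟩ := e.exists_affineMap_coe_eq
  have hdiv : ∀ z : ℂ, z / n = ((n : ℝ)⁻¹ : ℝ) • z := fun z => by
    rw [Complex.real_smul]; push_cast; ring
  have := A.inv_card_smul_sum_map (P := P) (by simpa [hP] using hn)
  rw [hA, hP] at this
  rw [hdiv, hdiv, this]

theorem fixMultiset_subset_singleton {P : Multiset ℂ} {a : ℂ} (h : ∀ z ∈ P, z = a) :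
    FixMultiset P ⊆ {a} := by
  intro x hx
  have hT : IsPlaneIsometry (fun z => 2 * a - z) :=
    ⟨Function.Involutive.bijective (f := fun z => 2 * a - z) fun z => by ring,
      fun z w => by rw [← norm_neg]; ring_nf⟩
  have hTP : P.map (fun z => 2 * a - z) = P := by
    conv_rhs => rw [← Multiset.map_id P]
    exact Multiset.map_congr rfl fun z hz => by rw [h z hz, id]; ring
  have := hx _ hT hTP
  simp only [Set.mem_singleton_iff]
  linear_combination -this / 2

theorem centroid_mem_fixMultiset {P : Multiset ℂ} {n : ℕ} (hP : Multiset.card P = n)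
    (hn : n ≠ 0) : P.sum / n ∈ FixMultiset P := by
  intro T hT hTP
  have := hT.isSimilarity.toDilationEquiv.centroid_map hP hn
  rwa [IsSimilarity.coe_toDilationEquiv, hTP, eq_comm] at this

theorem apply_mem_fixMultiset_map (e : ℂ ≃ᵈ ℂ) {P : Multiset ℂ} {x : ℂ}
    (hx : x ∈ FixMultiset P) : e x ∈ FixMultiset (P.map e) := by
  intro T hT hTP
  have hconj : P.map (e.symm ∘ T ∘ e) = P := by
    rw [← Multiset.map_map, ← Multiset.map_map, hTP, Multiset.map_map,
      show ⇑e.symm ∘ ⇑e = id from funext e.symm_apply_apply, Multiset.map_id]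
  exact e.symm_apply_eq.1 (hx (e.symm ∘ T ∘ e) (hT.conj e) hconj)

theorem fixMultiset_map (e : ℂ ≃ᵈ ℂ) (P : Multiset ℂ) :
    FixMultiset (P.map e) = e '' FixMultiset P := by
  refine Set.Subset.antisymm (fun y hy => ⟨e.symm y, ?_, e.apply_symm_apply y⟩)
    (Set.image_subset_iff.2 fun x => apply_mem_fixMultiset_map e)
  simpa only [Multiset.map_map, show ⇑e.symm ∘ ⇑e = id from funext e.symm_apply_apply,
    Multiset.map_id] using apply_mem_fixMultiset_map e.symm hy

theorem DilationEquiv.apply_eq_self_of_mem_fixMultiset (e : ℂ ≃ᵈ ℂ) {P : Multiset ℂ}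
    (hP : P ≠ 0) (he : P.map e = P) {x : ℂ} (hx : x ∈ FixMultiset P) : e x = x := by
  rcases Set.subsingleton_or_nontrivial {z | z ∈ P} with hS | hS
  · obtain ⟨a, ha⟩ := Multiset.exists_mem_of_ne_zero hP
    have hall : ∀ z ∈ P, z = a := fun z hz => hS hz ha
    have hea : e a ∈ P := he ▸ Multiset.mem_map_of_mem e ha
    rw [fixMultiset_subset_singleton hall hx, hall _ hea]
  · have himage : e '' {z | z ∈ P} = {z | z ∈ P} := by
      ext z
      simp only [Set.mem_image, Set.mem_ofPred_eq]
      rw [← Multiset.mem_map, he]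
    exact hx e (DilationEquiv.isPlaneIsometry (ratio_eq_one_of_image_eq e hS
      (Multiset.finite_toSet P).isBounded himage)) he

def IsAsymmetryCenterPair (n : ℕ) (P : Multiset ℂ) (p : ℂ × ℂ) : Prop :=
  Multiset.card P = n ∧ p.1 ∈ FixMultiset P ∧ p.2 ∈ FixMultiset P ∧
    (p.1 = P.sum / (n : ℂ) ↔ ∃ x : ℂ, FixMultiset P = {x}) ∧
    ((P.sum / (n : ℂ) ≠ p.1 ∧ P.sum / (n : ℂ) ≠ p.2 ∧ p.1 ≠ p.2 ∧
        ¬ Collinear ℝ ({P.sum / (n : ℂ), p.1, p.2} : Set ℂ)) ↔ FixMultiset P = Set.univ)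

namespace IsAsymmetryCenterPair

variable {n : ℕ} {P : Multiset ℂ} {p : ℂ × ℂ}

theorem smul_iff (hn : n ≠ 0) (e : ℂ ≃ᵈ ℂ) :
    IsAsymmetryCenterPair n (e • P) (e • p) ↔ IsAsymmetryCenterPair n P p := by
  simp only [IsAsymmetryCenterPair, DilationEquiv.smul_multiset_def, Prod.smul_fst,
    Prod.smul_snd, DilationEquiv.smul_def, Multiset.card_map]
  refine and_congr_right fun hP => ?_
  obtain ⟨A, hA⟩ := e.exists_affineMap_coe_eq
  have hinj : Function.Injective A := hA ▸ e.injective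
  rw [fixMultiset_map, e.centroid_map hP hn, e.injective.mem_set_image,
    e.injective.mem_set_image, e.injective.eq_iff, ← Set.ncard_eq_one,
    Set.ncard_image_of_injective _ e.injective, Set.ncard_eq_one,
    (Set.image_injective.2 e.injective).eq_iff' (Set.image_univ_of_surjective e.surjective),
    e.injective.ne_iff, e.injective.ne_iff, e.injective.ne_iff, ← hA,
    A.collinear_triple_iff hinj]

theorem smul_eq_self (hn : n ≠ 0) (h : IsAsymmetryCenterPair n P p) {e : ℂ ≃ᵈ ℂ}
    (he : e • P = P) : e • p = p := by
  have hP : P ≠ 0 := by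
    rintro rfl
    exact hn h.1.symm
  exact Prod.ext (e.apply_eq_self_of_mem_fixMultiset hP he h.2.1)
    (e.apply_eq_self_of_mem_fixMultiset hP he h.2.2.1)

theorem exists_of_card_eq (hP : Multiset.card P = n) (hn : n ≠ 0) :
    ∃ p, IsAsymmetryCenterPair n P p := by
  have hc := centroid_mem_fixMultiset hP hn
  by_cases hU : FixMultiset P = Set.univ
  · refine ⟨(P.sum / n + 1, P.sum / n + Complex.I), hP, hU ▸ trivial, hU ▸ trivial,
      iff_of_false (by simp) ?_,
      iff_of_true ⟨?_, ?_, ?_, Complex.not_collinear_add_one_add_I _⟩ hU⟩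
    · rintro ⟨x, hx⟩
      have hx1 : x + 1 ∈ ({x} : Set ℂ) := hx ▸ hU ▸ Set.mem_univ (x + 1)
      simp at hx1
    all_goals simp [Complex.ext_iff]
  · obtain ⟨x, hx, hxc⟩ := Set.exists_mem_eq_iff_exists_eq_singleton hc
    exact ⟨(x, x), hP, hx, hx, hxc, iff_of_false (fun h => h.2.2.1 rfl) hU⟩

end IsAsymmetryCenterPair

/-- Existence of the centers of rotational and axial asymmetry for
`n`-multisets: `n`-multiset centers `X` and `Y` such that (a) `X P` equals the
centroid of `P` iff `Fix P` is a single point, and (b) the centroid, `X P` and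
`Y P` are pairwise distinct and not collinear iff `Fix P = ℂ`. -/
theorem stmt8 (n : ℕ) (hn : 1 ≤ n) :
    ∃ X Y : Multiset ℂ → ℂ,
      (∀ P : Multiset ℂ, Multiset.card P = n →
        ∀ f : ℂ → ℂ, IsSimilarity f → X (Multiset.map f P) = f (X P)) ∧
      (∀ P : Multiset ℂ, Multiset.card P = n →
        ∀ f : ℂ → ℂ, IsSimilarity f → Y (Multiset.map f P) = f (Y P)) ∧
      (∀ P : Multiset ℂ, Multiset.card P = n →
        (X P = P.sum / (n : ℂ) ↔ ∃ x : ℂ, FixMultiset P = {x})) ∧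
      (∀ P : Multiset ℂ, Multiset.card P = n →
        ((P.sum / (n : ℂ) ≠ X P ∧ P.sum / (n : ℂ) ≠ Y P ∧ X P ≠ Y P ∧
            ¬ Collinear ℝ ({P.sum / (n : ℂ), X P, Y P} : Set ℂ)) ↔
          FixMultiset P = Set.univ)) := by
  have hn0 : n ≠ 0 := Nat.one_le_iff_ne_zero.1 hn
  obtain ⟨Z, hZ⟩ := exists_equivariant_selection (G := ℂ ≃ᵈ ℂ) (IsAsymmetryCenterPair n)
    (fun e _ _ h => (IsAsymmetryCenterPair.smul_iff hn0 e).2 h)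
    (fun _ _ _ h he => h.smul_eq_self hn0 he)
  replace hZ : ∀ P, Multiset.card P = n →
      IsAsymmetryCenterPair n P (Z P) ∧ ∀ e : ℂ ≃ᵈ ℂ, Z (e • P) = e • Z P :=
    fun P hP => hZ P (IsAsymmetryCenterPair.exists_of_card_eq hP hn0)
  refine ⟨fun P => (Z P).1, fun P => (Z P).2, fun P hP f hf => ?_, fun P hP f hf => ?_,
    fun P hP => (hZ P hP).1.2.2.2.1, fun P hP => (hZ P hP).1.2.2.2.2⟩
  · exact congrArg Prod.fst ((hZ P hP).2 hf.toDilationEquiv)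
  · exact congrArg Prod.snd ((hZ P hP).2 hf.toDilationEquiv)
end
end

section
/- (Main Theorem for n-gons, part (i).) Let n ≥ 3, let F ⊆ (Fin n → ℂ) be a family of labellings closed under similarities and relabellings, let Z be an n-gon center on F, let v ∈ F, and let T be a symmetry of the n-gon v. Then T(Z(v)) = Z(v); in particular, Z(v) belongs to Fix(v), the set of points fixed by the group of symmetries of the n-gon v. -/
noncomputable section

/-- `α` is an element of the dihedral subgroup of the permutations of `Fin n`:
`i ↦ i + k` or `i ↦ k - i` (mod `n`). -/
def IsDihedral (n : ℕ) (α : Fin n → Fin n) : Prop :=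
  (∃ k : Fin n, ∀ i, α i = i + k) ∨ (∃ k : Fin n, ∀ i, α i = k - i)

/-- `T` is a symmetry of the `n`-gon labelled by `v`: a plane isometry with
`T ∘ v = v ∘ α` for some dihedral relabelling `α`. -/
def IsPolygonSymmetry (n : ℕ) (v : Fin n → ℂ) (T : ℂ → ℂ) : Prop :=
  IsPlaneIsometry T ∧ ∃ α : Fin n → Fin n, IsDihedral n α ∧ T ∘ v = v ∘ α

/-- The set of points fixed by every symmetry of the `n`-gon labelled by `v`. -/
def FixPolygon (n : ℕ) (v : Fin n → ℂ) : Set ℂ :=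
  {x | ∀ T : ℂ → ℂ, IsPolygonSymmetry n v T → T x = x}

/-! A symmetry `T` of `v` is a similarity, so equivariance of `Z` gives
`T (Z v) = Z (T ∘ v) = Z (v ∘ α)`, and invariance under relabelling gives `Z (v ∘ α) = Z v`. -/

theorem IsPlaneIsometry.isSimilarity_s14 {f : ℂ → ℂ} (hf : IsPlaneIsometry f) : IsSimilarity f :=
  ⟨hf.1, 1, one_pos, by simpa using hf.2⟩

theorem isSimilarity_id : IsSimilarity id :=
  ⟨Function.bijective_id, 1, one_pos, by simp⟩

theorem IsPolygonSymmetry.apply_center_eq {n : ℕ} {F : Set (Fin n → ℂ)}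
    (hFclosed : ∀ v ∈ F, ∀ f : ℂ → ℂ, IsSimilarity f →
      ∀ α : Fin n → Fin n, IsDihedral n α → (f ∘ v ∘ α) ∈ F)
    {Z : (Fin n → ℂ) → ℂ}
    (hZdih : ∀ v ∈ F, ∀ α : Fin n → Fin n, IsDihedral n α → v ∘ α ∈ F →
      Z (v ∘ α) = Z v)
    (hZsim : ∀ v ∈ F, ∀ f : ℂ → ℂ, IsSimilarity f → Z (f ∘ v) = f (Z v))
    {v : Fin n → ℂ} (hv : v ∈ F) {T : ℂ → ℂ} (hT : IsPolygonSymmetry n v T) :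
    T (Z v) = Z v := by
  obtain ⟨hTiso, α, hα, hTv⟩ := hT
  have hrelabel : v ∘ α ∈ F := hFclosed v hv id isSimilarity_id α hα
  calc T (Z v) = Z (T ∘ v) := (hZsim v hv T hTiso.isSimilarity_s14).symm
    _ = Z (v ∘ α) := by rw [hTv]
    _ = Z v := hZdih v hv α hα hrelabel

theorem stmt14_general (n : ℕ) (F : Set (Fin n → ℂ))
    (hFclosed : ∀ v ∈ F, ∀ f : ℂ → ℂ, IsSimilarity f →
      ∀ α : Fin n → Fin n, IsDihedral n α → (f ∘ v ∘ α) ∈ F)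
    (Z : (Fin n → ℂ) → ℂ)
    (hZdih : ∀ v ∈ F, ∀ α : Fin n → Fin n, IsDihedral n α → v ∘ α ∈ F →
      Z (v ∘ α) = Z v)
    (hZsim : ∀ v ∈ F, ∀ f : ℂ → ℂ, IsSimilarity f → Z (f ∘ v) = f (Z v))
    (v : Fin n → ℂ) (hv : v ∈ F)
    (T : ℂ → ℂ) (hT : IsPolygonSymmetry n v T) :
    T (Z v) = Z v ∧ Z v ∈ FixPolygon n v :=
  ⟨hT.apply_center_eq hFclosed hZdih hZsim hv,
    fun _ hT' => hT'.apply_center_eq hFclosed hZdih hZsim hv⟩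

/-- Main theorem for `n`-gons, part (i): any `n`-gon center `Z` on a family `F`
of labellings closed under similarities and relabellings satisfies
`T (Z v) = Z v` for every symmetry `T` of the `n`-gon `v ∈ F`; in particular
`Z v ∈ Fix v`. -/
theorem stmt14 (n : ℕ) (hn : 3 ≤ n) (F : Set (Fin n → ℂ))
    (hFclosed : ∀ v ∈ F, ∀ f : ℂ → ℂ, IsSimilarity f →
      ∀ α : Fin n → Fin n, IsDihedral n α → (f ∘ v ∘ α) ∈ F)
    (Z : (Fin n → ℂ) → ℂ)
    (hZdih : ∀ v ∈ F, ∀ α : Fin n → Fin n, IsDihedral n α → v ∘ α ∈ F →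
      Z (v ∘ α) = Z v)
    (hZsim : ∀ v ∈ F, ∀ f : ℂ → ℂ, IsSimilarity f → Z (f ∘ v) = f (Z v))
    (v : Fin n → ℂ) (hv : v ∈ F)
    (T : ℂ → ℂ) (hT : IsPolygonSymmetry n v T) :
    T (Z v) = Z v ∧ Z v ∈ FixPolygon n v :=
  stmt14_general n F hFclosed Z hZdih hZsim v hv T hT
end
end
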